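/- arXiv:2404.06800 — 5 statements merged into one kernel-verified Lean document; each statement's English description precedes it below -/
import Mathlib

section
/- Let B ∈ ℝ^{n×n} with splitting B = B₁ + ⋯ + B_d (pairwise Hadamard-disjoint, each nonzero), and let 𝓑 = (I - 𝓛)⁻¹𝓤 be the dn×dn iteration matrix of the associated splitting scheme, where 𝓛 is the strictly block-lower-triangular matrix with (𝓛)_{pq} = B_q for q < p and 𝓤 has (𝓤)_{pq} = B_q for q ≥ p. Let 𝓑' be the iteration matrix of the cyclically shifted splitting {B_d, B₁, ..., B_{d-1}}. If λ ≠ 0 is an eigenvalue of 𝓑 with eigenvector [α₁; ...; α_d], then λ is an eigenvalue of 𝓑' with eigenvector [α_d; λα₁; ...; λα_{d-1}]. -/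
open Matrix

/-- A splitting of `B`: nonzero parts summing to `B` with pairwise vanishing
Hadamard products. -/
def IsSplitting {n d : ℕ} (B : Matrix (Fin n) (Fin n) ℝ)
    (Bs : Fin d → Matrix (Fin n) (Fin n) ℝ) : Prop :=
  (∀ p, Bs p ≠ 0) ∧ (∑ p, Bs p = B) ∧
    ∀ p q, p ≠ q → Matrix.hadamard (Bs p) (Bs q) = 0

/-- Strictly block-lower-triangular part `𝓛` of the splitting scheme. -/
def blockL {n d : ℕ} (Bs : Fin d → Matrix (Fin n) (Fin n) ℝ) :
    Matrix (Fin d × Fin n) (Fin d × Fin n) ℝ :=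
  Matrix.of fun pi qj => if qj.1 < pi.1 then Bs qj.1 pi.2 qj.2 else 0

/-- Block-upper-triangular part `𝓤` of the splitting scheme. -/
def blockU {n d : ℕ} (Bs : Fin d → Matrix (Fin n) (Fin n) ℝ) :
    Matrix (Fin d × Fin n) (Fin d × Fin n) ℝ :=
  Matrix.of fun pi qj => if pi.1 ≤ qj.1 then Bs qj.1 pi.2 qj.2 else 0

/-- The iteration matrix `𝓑 = (𝓘 - 𝓛)⁻¹ 𝓤` of a splitting. -/
noncomputable def iterMat {n d : ℕ} (Bs : Fin d → Matrix (Fin n) (Fin n) ℝ) :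
    Matrix (Fin d × Fin n) (Fin d × Fin n) ℝ :=
  (1 - blockL Bs)⁻¹ * blockU Bs

/-- Complexification of the iteration matrix. -/
noncomputable def iterMatC {n d : ℕ} (Bs : Fin d → Matrix (Fin n) (Fin n) ℝ) :
    Matrix (Fin d × Fin n) (Fin d × Fin n) ℂ :=
  (iterMat Bs).map Complex.ofReal

/-- Spectral radius of a real matrix, via its complexification. -/
noncomputable def specRad {m : Type*} [Fintype m] [DecidableEq m]
    (M : Matrix m m ℝ) : ENNReal :=
  spectralRadius ℂ (M.map Complex.ofReal)

lemma det_one_sub_blockL {n d : ℕ} (Bs : Fin d → Matrix (Fin n) (Fin n) ℝ) :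
    ((1 : Matrix (Fin d × Fin n) (Fin d × Fin n) ℝ) - blockL Bs).det = 1 := by
  have hbt : ((1 : Matrix (Fin d × Fin n) (Fin d × Fin n) ℝ) - blockL Bs).BlockTriangular
      (fun x => OrderDual.toDual x.1) := by
    intro i j hij
    have h : i.1 < j.1 := hij
    simp only [Matrix.sub_apply, blockL, of_apply, one_apply]
    rw [if_neg, if_neg, sub_zero]
    · exact fun h' => absurd h (not_lt.2 h'.le)
    · rintro rfl; exact lt_irrefl _ h
  rw [hbt.det_fintype]
  refine Finset.prod_eq_one fun k _ => ?_
  have : (((1 : Matrix (Fin d × Fin n) (Fin d × Fin n) ℝ) - blockL Bs).toSquareBlock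
      (fun x => OrderDual.toDual x.1) k) = 1 := by
    ext i j
    have hi : (i : Fin d × Fin n).1 = OrderDual.ofDual k := i.2
    have hj : (j : Fin d × Fin n).1 = OrderDual.ofDual k := j.2
    have hz : blockL Bs (i : Fin d × Fin n) (j : Fin d × Fin n) = 0 := by
      simp only [blockL, of_apply]
      rw [if_neg]; rw [hi, hj]; exact lt_irrefl _
    simp only [toSquareBlock_def, Matrix.submatrix_apply, of_apply, Matrix.sub_apply, hz, sub_zero]
    by_cases h : i = j
    · subst h; rw [Matrix.one_apply_eq, Matrix.one_apply_eq]
    · rw [Matrix.one_apply_ne (fun h' => h (Subtype.ext h')), Matrix.one_apply_ne h]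
  rw [this, det_one]

lemma map_one_sub_blockL {n d : ℕ} (Bs : Fin d → Matrix (Fin n) (Fin n) ℝ) :
    ((1 : Matrix (Fin d × Fin n) (Fin d × Fin n) ℝ) - blockL Bs).map
        (Complex.ofRealHom : ℝ →+* ℂ)
      = (1 : Matrix (Fin d × Fin n) (Fin d × Fin n) ℂ)
        - (blockL Bs).map Complex.ofReal := by
  ext x y
  by_cases h : x = y
  · subst h
    simp [Matrix.map_apply, Matrix.one_apply_eq]
  · simp [Matrix.map_apply, Matrix.one_apply_ne h]

lemma isUnit_detC {n d : ℕ} (Bs : Fin d → Matrix (Fin n) (Fin n) ℝ) :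
    IsUnit ((1 : Matrix (Fin d × Fin n) (Fin d × Fin n) ℂ)
      - (blockL Bs).map Complex.ofReal).det := by
  have h2 : (((1 : Matrix (Fin d × Fin n) (Fin d × Fin n) ℝ) - blockL Bs).map
        (⇑(Complex.ofRealHom : ℝ →+* ℂ))).det
      = Complex.ofRealHom ((1 - blockL Bs).det) :=
    (RingHom.map_det (Complex.ofRealHom : ℝ →+* ℂ)
      ((1 : Matrix (Fin d × Fin n) (Fin d × Fin n) ℝ) - blockL Bs)).symm
  rw [← map_one_sub_blockL, h2, det_one_sub_blockL]
  simp

lemma iterMatC_eq {n d : ℕ} (Bs : Fin d → Matrix (Fin n) (Fin n) ℝ) :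
    iterMatC Bs = ((1 : Matrix (Fin d × Fin n) (Fin d × Fin n) ℂ)
        - (blockL Bs).map Complex.ofReal)⁻¹ * (blockU Bs).map Complex.ofReal := by
  have hu : IsUnit ((1 : Matrix (Fin d × Fin n) (Fin d × Fin n) ℝ) - blockL Bs).det := by
    rw [det_one_sub_blockL]; exact isUnit_one
  have hinv : (((1 : Matrix (Fin d × Fin n) (Fin d × Fin n) ℝ) - blockL Bs)⁻¹).map
        (Complex.ofRealHom : ℝ →+* ℂ)
      = ((1 : Matrix (Fin d × Fin n) (Fin d × Fin n) ℂ)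
        - (blockL Bs).map Complex.ofReal)⁻¹ := by
    symm
    apply Matrix.inv_eq_right_inv
    rw [← map_one_sub_blockL, ← Matrix.map_mul, Matrix.mul_nonsing_inv _ hu]
    ext x y
    by_cases h : x = y
    · subst h; simp [Matrix.map_apply, Matrix.one_apply_eq]
    · simp [Matrix.map_apply, Matrix.one_apply_ne h]
  have : iterMatC Bs = (((1 : Matrix (Fin d × Fin n) (Fin d × Fin n) ℝ) - blockL Bs)⁻¹
      * blockU Bs).map (Complex.ofRealHom : ℝ →+* ℂ) := rfl
  rw [this, Matrix.map_mul, hinv]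
  rfl

lemma keyform {n d : ℕ} (Cs : Fin d → Matrix (Fin n) (Fin n) ℝ) (lam : ℂ)
    (v : Fin d → Fin n → ℂ) :
    ((blockU Cs).map Complex.ofReal).mulVec (fun x => v x.1 x.2)
      = ((1 : Matrix (Fin d × Fin n) (Fin d × Fin n) ℂ) - (blockL Cs).map Complex.ofReal).mulVec
          (lam • fun x => v x.1 x.2)
    ↔ ∀ p i, ∑ q, (if p ≤ q then (1:ℂ) else lam) * ∑ j, (Cs q i j : ℂ) * v q j
        = lam * v p i := by
  rw [funext_iff]
  rw [Prod.forall]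
  apply forall_congr'; intro p
  apply forall_congr'; intro i
  have hU : ((blockU Cs).map Complex.ofReal).mulVec (fun x => v x.1 x.2) (p, i)
      = ∑ q, if p ≤ q then ∑ j, (Cs q i j : ℂ) * v q j else 0 := by
    simp only [Matrix.mulVec, dotProduct, Fintype.sum_prod_type, Matrix.map_apply,
      blockU, of_apply]
    refine Finset.sum_congr rfl fun q _ => ?_
    by_cases h : p ≤ q
    · simp [h]
    · simp [h]
  have hL : ((1 : Matrix (Fin d × Fin n) (Fin d × Fin n) ℂ)
        - (blockL Cs).map Complex.ofReal).mulVec (lam • fun x => v x.1 x.2) (p, i)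
      = lam * v p i - ∑ q, if q < p then lam * ∑ j, (Cs q i j : ℂ) * v q j else 0 := by
    simp only [Matrix.mulVec, dotProduct, Fintype.sum_prod_type, Matrix.sub_apply,
      Matrix.map_apply, blockL, of_apply, Pi.smul_apply, smul_eq_mul, sub_mul,
      Finset.sum_sub_distrib]
    congr 1
    · simp [Matrix.one_apply, Prod.mk.injEq, ite_and, ite_mul, zero_mul,
        Finset.sum_ite_eq, Finset.sum_ite_eq']
    · refine Finset.sum_congr rfl fun q _ => ?_
      by_cases h : q < p
      · simp [h, Finset.mul_sum]; ring_nf; simp [mul_comm, mul_left_comm]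
      · simp [h]
  rw [hU, hL]
  constructor
  · intro h
    have h2 : (∑ q, if p ≤ q then ∑ j, (Cs q i j : ℂ) * v q j else 0)
        + ∑ q, (if q < p then lam * ∑ j, (Cs q i j : ℂ) * v q j else 0) = lam * v p i := by
      rw [h]; ring
    rw [← h2, ← Finset.sum_add_distrib]
    refine Finset.sum_congr rfl fun q _ => ?_
    by_cases h3 : p ≤ q
    · simp [h3, not_lt.2 h3]
    · simp [h3, lt_of_not_ge h3]
  · intro h
    have h2 : (∑ q, if p ≤ q then ∑ j, (Cs q i j : ℂ) * v q j else 0)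
        + ∑ q, (if q < p then lam * ∑ j, (Cs q i j : ℂ) * v q j else 0) = lam * v p i := by
      rw [← h, ← Finset.sum_add_distrib]
      refine Finset.sum_congr rfl fun q _ => ?_
      by_cases h3 : p ≤ q
      · simp [h3, not_lt.2 h3]
      · simp [h3, lt_of_not_ge h3]
    rw [← h2]; ring

/-- Cyclicity lemma: if `λ ≠ 0` is an eigenvalue of the iteration matrix of a
splitting `{B₁,…,B_d}` with eigenvector `[α₁;…;α_d]`, then `λ` is an eigenvalue
of the iteration matrix of the cyclic shift `{B_d, B₁, …, B_{d-1}}` with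
eigenvector `[α_d; λα₁; …; λα_{d-1}]`. -/
theorem cyclicity (n d : ℕ) (BJ : Matrix (Fin n) (Fin n) ℝ)
    (Bs : Fin (d + 1) → Matrix (Fin n) (Fin n) ℝ)
    (hsplit : IsSplitting BJ Bs)
    (lam : ℂ) (hlam : lam ≠ 0)
    (α : Fin (d + 1) → Fin n → ℂ)
    (hα : (fun x : Fin (d + 1) × Fin n => α x.1 x.2) ≠ 0)
    (heig : (iterMatC Bs).mulVec (fun x => α x.1 x.2)
      = lam • (fun x : Fin (d + 1) × Fin n => α x.1 x.2)) :
    (fun x : Fin (d + 1) × Fin n =>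
        (if x.1 = 0 then 1 else lam) * α (x.1 - 1) x.2) ≠ 0 ∧
      (iterMatC (fun p => Bs (p - 1))).mulVec
          (fun x => (if x.1 = 0 then 1 else lam) * α (x.1 - 1) x.2)
        = lam • (fun x : Fin (d + 1) × Fin n =>
            (if x.1 = 0 then 1 else lam) * α (x.1 - 1) x.2) := by
  -- the coefficient identity
  have hzs : (0 : Fin (d + 1)) - 1 = Fin.last d := by
    apply Fin.ext
    rw [Fin.coe_sub_one, if_pos rfl, Fin.val_last]
  have C : ∀ p r : Fin (d + 1),
      (if p ≤ r + 1 then (1:ℂ) else lam) * (if r + 1 = 0 then 1 else lam)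
        = (if p = 0 then 1 else lam) * (if p - 1 ≤ r then 1 else lam) := by
    intro p r
    by_cases hr : r = Fin.last d
    · subst hr
      rw [Fin.last_add_one]
      by_cases hp : p = 0
      · subst hp
        rw [if_pos (le_refl _), if_pos rfl, if_pos (Fin.le_last _)]
      · rw [if_neg (fun h => hp (le_antisymm h (Fin.zero_le _))), if_pos rfl, if_neg hp,
          if_pos (Fin.le_last _)]
    · have h0 : r + 1 ≠ 0 := by
        intro h
        apply hr
        have h' := congrArg (fun z => z - (1 : Fin (d + 1))) h
        simpa [add_sub_cancel_right, hzs] using h'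
      rw [if_neg h0]
      by_cases hp : p = 0
      · subst hp
        have hc : ¬((0 : Fin (d + 1)) - 1 ≤ r) := by
          rw [hzs]
          exact fun hle => hr (le_antisymm (Fin.le_last r) hle)
        rw [if_pos (Fin.zero_le _), if_pos rfl, if_neg hc]
      · rw [if_neg hp]
        have h1 : ((r + 1 : Fin (d + 1)) : ℕ) = (r : ℕ) + 1 := by
          rw [Fin.val_add_one, if_neg hr]
        have h2 : ((p - 1 : Fin (d + 1)) : ℕ) = (p : ℕ) - 1 := by
          rw [Fin.coe_sub_one, if_neg hp]
        have h3 : (p : ℕ) ≠ 0 := fun h => hp (Fin.ext h)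
        have hiff : p ≤ r + 1 ↔ p - 1 ≤ r := by
          rw [Fin.le_def, Fin.le_def, h1, h2]
          omega
        by_cases hle : p ≤ r + 1
        · rw [if_pos hle, if_pos (hiff.mp hle)]
          ring
        · rw [if_neg hle, if_neg (fun c => hle (hiff.mpr c))]
  -- the derived scalar equations for the original splitting
  rw [iterMatC_eq] at heig
  have h1 : ((blockU Bs).map Complex.ofReal).mulVec (fun x => α x.1 x.2)
      = ((1 : Matrix (Fin (d+1) × Fin n) (Fin (d+1) × Fin n) ℂ)
        - (blockL Bs).map Complex.ofReal).mulVec (lam • fun x => α x.1 x.2) := by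
    have h := congrArg (fun w => (((1 : Matrix (Fin (d+1) × Fin n) (Fin (d+1) × Fin n) ℂ)
      - (blockL Bs).map Complex.ofReal)).mulVec w) heig
    simpa [Matrix.mulVec_mulVec, Matrix.mul_nonsing_inv_cancel_left _ _ (isUnit_detC Bs)]
      using h
  have E := (keyform Bs lam α).mp h1
  -- the scalar equations for the shifted splitting
  have goal2 : ∀ p i, ∑ q, (if p ≤ q then (1:ℂ) else lam)
      * ∑ j, ((Bs (q - 1)) i j : ℂ) * ((if q = 0 then 1 else lam) * α (q - 1) j)
      = lam * ((if p = 0 then 1 else lam) * α (p - 1) i) := by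
    intro p i
    have hre : ∑ q, (if p ≤ q then (1:ℂ) else lam)
        * ∑ j, ((Bs (q - 1)) i j : ℂ) * ((if q = 0 then 1 else lam) * α (q - 1) j)
        = ∑ r, (if p ≤ r + 1 then (1:ℂ) else lam)
          * ∑ j, ((Bs r) i j : ℂ) * ((if r + 1 = 0 then 1 else lam) * α r j) := by
      refine (Fintype.sum_equiv (Equiv.addRight (1 : Fin (d+1)))
        (fun r => (if p ≤ r + 1 then (1:ℂ) else lam)
          * ∑ j, ((Bs r) i j : ℂ) * ((if r + 1 = 0 then 1 else lam) * α r j)) _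
        (fun r => ?_)).symm
      simp only [Equiv.coe_addRight, add_sub_cancel_right]
      rfl
    rw [hre]
    have hterm : ∀ r : Fin (d+1), (if p ≤ r + 1 then (1:ℂ) else lam)
        * ∑ j, ((Bs r) i j : ℂ) * ((if r + 1 = 0 then 1 else lam) * α r j)
        = (if p = 0 then 1 else lam)
          * ((if p - 1 ≤ r then (1:ℂ) else lam) * ∑ j, ((Bs r) i j : ℂ) * α r j) := by
      intro r
      have hin : ∑ j, ((Bs r) i j : ℂ) * ((if r + 1 = 0 then 1 else lam) * α r j)
          = (if r + 1 = 0 then (1:ℂ) else lam) * ∑ j, ((Bs r) i j : ℂ) * α r j := by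
        rw [Finset.mul_sum]
        exact Finset.sum_congr rfl fun j _ => by ring
      rw [hin, ← mul_assoc, C p r, mul_assoc]
    rw [Finset.sum_congr rfl fun r _ => hterm r, ← Finset.mul_sum, E (p - 1) i]
    ring
  have hkey := (keyform (fun q => Bs (q - 1)) lam
    (fun p i => (if p = 0 then 1 else lam) * α (p - 1) i)).mpr goal2
  constructor
  · intro hz
    apply hα
    funext x
    have h := congrFun hz (x.1 + 1, x.2)
    simp only [add_sub_cancel_right, Pi.zero_apply] at h
    have hc : (if x.1 + 1 = 0 then (1:ℂ) else lam) ≠ 0 := by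
      split_ifs
      · exact one_ne_zero
      · exact hlam
    simpa using (mul_eq_zero.mp h).resolve_left hc
  · rw [iterMatC_eq]
    have h2 : ((blockU fun q => Bs (q - 1)).map Complex.ofReal).mulVec
          (fun x : Fin (d+1) × Fin n => (if x.1 = 0 then 1 else lam) * α (x.1 - 1) x.2)
        = ((1 : Matrix (Fin (d+1) × Fin n) (Fin (d+1) × Fin n) ℂ)
          - (blockL fun q => Bs (q - 1)).map Complex.ofReal).mulVec
            (lam • fun x : Fin (d+1) × Fin n =>
              (if x.1 = 0 then 1 else lam) * α (x.1 - 1) x.2) := hkey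
    calc (((1 : Matrix (Fin (d+1) × Fin n) (Fin (d+1) × Fin n) ℂ)
          - (blockL fun q => Bs (q - 1)).map Complex.ofReal)⁻¹
            * (blockU fun q => Bs (q - 1)).map Complex.ofReal).mulVec
          (fun x => (if x.1 = 0 then 1 else lam) * α (x.1 - 1) x.2)
        = (((1 : Matrix (Fin (d+1) × Fin n) (Fin (d+1) × Fin n) ℂ)
          - (blockL fun q => Bs (q - 1)).map Complex.ofReal)⁻¹).mulVec
            (((blockU fun q => Bs (q - 1)).map Complex.ofReal).mulVec
              (fun x => (if x.1 = 0 then 1 else lam) * α (x.1 - 1) x.2)) := by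
          rw [Matrix.mulVec_mulVec]
      _ = lam • fun x : Fin (d+1) × Fin n =>
            (if x.1 = 0 then 1 else lam) * α (x.1 - 1) x.2 := by
          rw [h2, Matrix.mulVec_mulVec,
            Matrix.nonsing_inv_mul _ (isUnit_detC (fun q => Bs (q - 1))), Matrix.one_mulVec]
end

section
/- Let (B₁,...,B_d) be a splitting of the Jacobi iteration matrix B_J. Then λ = 1 is an eigenvalue of the iteration matrix 𝓑_{(d)} if and only if λ = 1 is an eigenvalue of B_J. -/
open Matrix

/-!
Write `𝓛 + 𝓤 = E * R`, where `R = [B₁ ⋯ B_d]` is the block row of the splitting and `E`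
stacks `d` identity blocks. Then `1 - 𝓑 = (1 - 𝓛)⁻¹ * (1 - E * R)`, and `1 - 𝓛` is invertible
because `𝓛` is strictly block lower triangular, hence nilpotent. By the Weinstein–Aronszajn
identity `det (1 - E * R) = det (1 - R * E) = det (1 - B_J)`, so `det (1 - 𝓑)` vanishes iff
`det (1 - B_J)` does.
-/

namespace Matrix

variable {m R : Type*} [Fintype m] [DecidableEq m] [Semiring R]

theorem pow_apply_eq_zero_of_lt_add {M : Matrix m m R} (b : m → ℕ)
    (hM : ∀ i j, b i ≤ b j → M i j = 0) (k : ℕ) :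
    ∀ i j, b i < b j + k → (M ^ k) i j = 0 := by
  induction k with
  | zero =>
    intro i j hij
    exact one_apply_ne fun h => by subst h; omega
  | succ k ih =>
    intro i j hij
    rw [pow_succ', mul_apply]
    refine Finset.sum_eq_zero fun r _ => ?_
    rcases le_or_gt (b i) (b r) with hir | hri
    · rw [hM i r hir, zero_mul]
    · rw [ih r j (by omega), mul_zero]

theorem isNilpotent_of_apply_eq_zero_of_le {M : Matrix m m R} {d : ℕ}
    (b : m → ℕ) (hb : ∀ i, b i < d) (hM : ∀ i j, b i ≤ b j → M i j = 0) :
    IsNilpotent M :=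
  ⟨d, ext fun i j =>
    pow_apply_eq_zero_of_lt_add b hM d i j ((hb i).trans_le (Nat.le_add_left d (b j)))⟩

theorem one_mem_spectrum_iff_det_one_sub_eq_zero {K : Type*} [Field K] (M : Matrix m m K) :
    1 ∈ spectrum K M ↔ det (1 - M) = 0 := by
  rw [spectrum.mem_iff, map_one, isUnit_iff_isUnit_det, isUnit_iff_ne_zero, not_not]

end Matrix

section BlockRow

variable {R ι m : Type*} [Fintype m] [DecidableEq m] [Semiring R]

def blockRow (Bs : ι → Matrix m m R) : Matrix m (ι × m) R :=
  of fun i qj => Bs qj.1 i qj.2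

variable (R ι m) in
def stackedOne : Matrix (ι × m) m R :=
  of fun pi j => (1 : Matrix m m R) pi.2 j

theorem stackedOne_mul_apply {l : Type*} (M : Matrix m l R) (pi : ι × m) (j : l) :
    (stackedOne R ι m * M) pi j = M pi.2 j := by
  simp [mul_apply, stackedOne, one_apply]

theorem blockRow_mul_stackedOne [Fintype ι] (Bs : ι → Matrix m m R) :
    blockRow Bs * stackedOne R ι m = ∑ q, Bs q := by
  ext i j
  simp [mul_apply, stackedOne, blockRow, one_apply, Matrix.sum_apply, Fintype.sum_prod_type]

end BlockRow

section Splitting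

variable {n d : ℕ} (Bs : Fin d → Matrix (Fin n) (Fin n) ℝ)

theorem blockL_isNilpotent : IsNilpotent (blockL Bs) :=
  isNilpotent_of_apply_eq_zero_of_le (fun pi => pi.1.val) (fun pi => pi.1.isLt)
    fun _ _ h => if_neg (Fin.not_lt.mpr h)

theorem blockL_add_blockU :
    blockL Bs + blockU Bs = stackedOne ℝ (Fin d) (Fin n) * blockRow Bs := by
  ext pi qj
  rw [stackedOne_mul_apply, Matrix.add_apply]
  simp only [blockL, blockU, blockRow, of_apply]
  rcases lt_or_ge qj.1 pi.1 with h | h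
  · rw [if_pos h, if_neg (not_le.mpr h), add_zero]
  · rw [if_neg (not_lt.mpr h), if_pos h, zero_add]

theorem isUnit_det_one_sub_blockL : IsUnit (det (1 - blockL Bs)) :=
  (isUnit_iff_isUnit_det _).mp (blockL_isNilpotent Bs).isUnit_one_sub

theorem det_one_sub_iterMat :
    det (1 - iterMat Bs) = det (1 - blockL Bs)⁻¹ * det (1 - ∑ q, Bs q) := by
  have hfactor : 1 - iterMat Bs =
      (1 - blockL Bs)⁻¹ * (1 - stackedOne ℝ (Fin d) (Fin n) * blockRow Bs) := by
    rw [iterMat, ← blockL_add_blockU, sub_add_eq_sub_sub, Matrix.mul_sub,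
      nonsing_inv_mul _ (isUnit_det_one_sub_blockL Bs)]
  rw [hfactor, det_mul, det_one_sub_mul_comm, blockRow_mul_stackedOne]

end Splitting

/-- `λ = 1` is an eigenvalue of the iteration matrix of a splitting of `B_J`
if and only if `λ = 1` is an eigenvalue of `B_J`. -/
theorem one_eigenvalue_iff (n d : ℕ) (BJ : Matrix (Fin n) (Fin n) ℝ)
    (Bs : Fin d → Matrix (Fin n) (Fin n) ℝ)
    (hsplit : IsSplitting BJ Bs) :
    (1 : ℝ) ∈ spectrum ℝ (iterMat Bs) ↔ (1 : ℝ) ∈ spectrum ℝ BJ := by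
  have hL := isUnit_nonsing_inv_det _ (isUnit_det_one_sub_blockL Bs)
  rw [one_mem_spectrum_iff_det_one_sub_eq_zero, one_mem_spectrum_iff_det_one_sub_eq_zero,
    det_one_sub_iterMat, hsplit.2.1, hL.mul_right_eq_zero]
end

section
/- If the Jacobi iteration matrix B_J is irreducible, B_J ≥ O entrywise, and (B₁,...,B_d) is a splitting of B_J, then the iteration matrix 𝓑_{(d)} has a Perron eigenvector [α₁;...;α_d] corresponding to ρ(𝓑_{(d)}) that is strictly positive in every entry. -/
open Matrix

/-- A matrix is irreducible iff no permutation similarity puts it in block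
upper triangular form; equivalently, for every nonempty proper subset `S` of
indices there are `i ∈ S`, `j ∉ S` with `B i j ≠ 0`. -/
def IsIrreducibleMatrix {n : ℕ} (B : Matrix (Fin n) (Fin n) ℝ) : Prop :=
  ∀ S : Set (Fin n), S.Nonempty → S ≠ Set.univ → ∃ i ∈ S, ∃ j ∉ S, B i j ≠ 0


set_option linter.unusedSectionVars false
set_option linter.unnecessarySimpa false
set_option maxHeartbeats 1600000

open Finset Relation
open scoped NNReal ENNReal



section NonnegBasics
variable {m : Type*} [Fintype m] [DecidableEq m]

lemma entry_mul_nonneg {A B : Matrix m m ℝ} (hA : ∀ x y, 0 ≤ A x y)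
    (hB : ∀ x y, 0 ≤ B x y) : ∀ x y, 0 ≤ (A * B) x y := by
  intro x y
  rw [Matrix.mul_apply]
  exact Finset.sum_nonneg fun z _ => mul_nonneg (hA x z) (hB z y)

lemma entry_pow_nonneg {A : Matrix m m ℝ} (hA : ∀ x y, 0 ≤ A x y) :
    ∀ k, ∀ x y, (0:ℝ) ≤ (A ^ k) x y := by
  intro k
  induction k with
  | zero => intro x y; by_cases h : x = y <;>
      simp [pow_zero, Matrix.one_apply, h]
  | succ k ih =>
      rw [pow_succ]
      exact entry_mul_nonneg ih hA

lemma entry_mul_ne_zero_iff {A B : Matrix m m ℝ} (hA : ∀ x y, 0 ≤ A x y)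
    (hB : ∀ x y, 0 ≤ B x y) {x y : m} :
    (A * B) x y ≠ 0 ↔ ∃ z, A x z ≠ 0 ∧ B z y ≠ 0 := by
  constructor
  · intro h
    rw [Matrix.mul_apply] at h
    obtain ⟨z, _, hz⟩ := Finset.exists_ne_zero_of_sum_ne_zero h
    exact ⟨z, fun h0 => hz (by simp [h0]), fun h0 => hz (by simp [h0])⟩
  · rintro ⟨z, hAz, hBz⟩
    have h1 : 0 < A x z * B z y :=
      mul_pos ((hA x z).lt_of_ne (Ne.symm hAz)) ((hB z y).lt_of_ne (Ne.symm hBz))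
    have h2 : A x z * B z y ≤ (A * B) x y := by
      rw [Matrix.mul_apply]
      exact Finset.single_le_sum (f := fun w => A x w * B w y)
        (fun w _ => mul_nonneg (hA x w) (hB w y)) (Finset.mem_univ z)
    exact (h1.trans_le h2).ne'
end NonnegBasics


section PFIrr
variable {m : Type*} [Fintype m] [DecidableEq m] [Nonempty m]

/-- Support-growth boosting: `(1+A)^(N-1)` maps nonneg nonzero vectors to
strictly positive vectors, when `A` is nonneg irreducible. -/
lemma pf_pos_boost {A : Matrix m m ℝ} (hA : ∀ x y, 0 ≤ A x y)
    (hirr : ∀ S : Set m, S.Nonempty → S ≠ Set.univ → ∃ i ∈ S, ∃ j ∉ S, A i j ≠ 0) :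
    ∀ y : m → ℝ, (∀ i, 0 ≤ y i) → y ≠ 0 →
      ∀ i, 0 < ((((1:Matrix m m ℝ) + A) ^ (Fintype.card m - 1)).mulVec y) i := by
  classical
  have main : ∀ k : ℕ, ∀ y : m → ℝ, (∀ i, 0 ≤ y i) → y ≠ 0 →
      Fintype.card m ≤ (univ.filter fun i => y i ≠ 0).card + k →
      ∀ i, 0 < ((((1:Matrix m m ℝ) + A) ^ k).mulVec y) i := by
    intro k
    induction k with
    | zero =>
      intro y hy hyne hcard i
      have hfull : (univ.filter fun i => y i ≠ 0) = univ := by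
        apply Finset.eq_univ_of_card
        exact le_antisymm (Finset.card_le_univ _) (by simpa using hcard)
      have : y i ≠ 0 := by
        have := Finset.mem_filter.mp (hfull ▸ Finset.mem_univ i)
        exact this.2
      simpa [pow_zero, Matrix.one_mulVec] using (hy i).lt_of_ne (Ne.symm this)
    | succ k ih =>
      intro y hy hyne hcard i
      set z := ((1:Matrix m m ℝ) + A).mulVec y with hz
      have hzval : ∀ j, z j = y j + ∑ w, A j w * y w := by
        intro j
        simp [hz, Matrix.add_mulVec, Matrix.one_mulVec, Matrix.mulVec, dotProduct]
      have hznn : ∀ j, 0 ≤ z j := by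
        intro j; rw [hzval]
        exact add_nonneg (hy j) (Finset.sum_nonneg fun w _ => mul_nonneg (hA j w) (hy w))
      have hzy : ∀ j, y j ≤ z j := by
        intro j; rw [hzval]
        exact le_add_of_nonneg_right (Finset.sum_nonneg fun w _ => mul_nonneg (hA j w) (hy w))
      have hsub : (univ.filter fun j => y j ≠ 0) ⊆ (univ.filter fun j => z j ≠ 0) := by
        intro j hj
        have hyj := (Finset.mem_filter.mp hj).2
        have : 0 < y j := (hy j).lt_of_ne (Ne.symm hyj)
        exact Finset.mem_filter.mpr ⟨Finset.mem_univ j, (this.trans_le (hzy j)).ne'⟩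
      have hzne : z ≠ 0 := by
        intro h0
        obtain ⟨j, hj⟩ := Function.ne_iff.mp hyne
        have : 0 < y j := (hy j).lt_of_ne (Ne.symm hj)
        have := (this.trans_le (hzy j))
        rw [h0] at this; exact lt_irrefl _ this
      have hstep : ((((1:Matrix m m ℝ) + A) ^ (k+1)).mulVec y) =
          ((((1:Matrix m m ℝ) + A) ^ k).mulVec z) := by
        rw [hz, Matrix.mulVec_mulVec, ← pow_succ]
      rw [hstep]
      by_cases hfull : (univ.filter fun j => y j ≠ 0) = univ
      · have hzfull : (univ.filter fun j => z j ≠ 0) = univ := by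
          apply Finset.eq_univ_of_forall
          intro j
          apply hsub
          rw [hfull]
          exact Finset.mem_univ j
        exact ih z hznn hzne
          (by rw [hzfull, Finset.card_univ]; exact Nat.le_add_right _ _) i
      · -- strict growth via irreducibility
        have hSne : ({j | y j = 0} : Set m).Nonempty := by
          by_contra h
          apply hfull
          apply Finset.eq_univ_of_forall
          intro j
          simp only [Finset.mem_filter, Finset.mem_univ, true_and]
          intro h0
          exact h ⟨j, h0⟩
        have hSnu : ({j | y j = 0} : Set m) ≠ Set.univ := by
          obtain ⟨j, hj⟩ := Function.ne_iff.mp hyne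
          intro h
          exact hj (by have := Set.eq_univ_iff_forall.mp h j; exact this)
        obtain ⟨a, ha, b, hb, hab⟩ := hirr _ hSne hSnu
        have hyb : 0 < y b := (hy b).lt_of_ne (Ne.symm hb)
        have hza : 0 < z a := by
          rw [hzval]
          have h1 : 0 < A a b * y b := mul_pos ((hA a b).lt_of_ne (Ne.symm hab)) hyb
          have h2 : A a b * y b ≤ ∑ w, A a w * y w :=
            Finset.single_le_sum (f := fun w => A a w * y w)
              (fun w _ => mul_nonneg (hA a w) (hy w)) (Finset.mem_univ b)
          have := h1.trans_le h2
          have hya : y a = 0 := ha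
          linarith
        have hgrow : (univ.filter fun j => y j ≠ 0).card + 1 ≤
            (univ.filter fun j => z j ≠ 0).card := by
          have hma : a ∉ (univ.filter fun j => y j ≠ 0) := by
            simp only [Finset.mem_filter, Finset.mem_univ, true_and, not_not]
            exact ha
          have : insert a (univ.filter fun j => y j ≠ 0) ⊆
              (univ.filter fun j => z j ≠ 0) := by
            intro j hj
            rcases Finset.mem_insert.mp hj with rfl | hj
            · exact Finset.mem_filter.mpr ⟨Finset.mem_univ j, hza.ne'⟩
            · exact hsub hj
          calc (univ.filter fun j => y j ≠ 0).card + 1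
              = (insert a (univ.filter fun j => y j ≠ 0)).card :=
                (Finset.card_insert_of_notMem hma).symm
            _ ≤ _ := Finset.card_le_card this
        exact ih z hznn hzne (by omega) i
  intro y hy hyne i
  have h1 : 1 ≤ (univ.filter fun i => y i ≠ 0).card := by
    obtain ⟨j, hj⟩ := Function.ne_iff.mp hyne
    exact Finset.card_pos.mpr ⟨j, Finset.mem_filter.mpr ⟨Finset.mem_univ j, hj⟩⟩
  have hN : 1 ≤ Fintype.card m := Fintype.card_pos
  exact main (Fintype.card m - 1) y hy hyne (by omega) i
end PFIrr


section PFIrrMain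
variable {m : Type*} [Fintype m] [DecidableEq m] [Nonempty m]

theorem pf_irreducible {A : Matrix m m ℝ} (hA : ∀ x y, 0 ≤ A x y)
    (hirr : ∀ S : Set m, S.Nonempty → S ≠ Set.univ → ∃ i ∈ S, ∃ j ∉ S, A i j ≠ 0) :
    ∃ r : ℝ, 0 ≤ r ∧ ∃ v : m → ℝ, (∀ x, 0 < v x) ∧ A.mulVec v = r • v := by
  classical
  set N := Fintype.card m with hN
  have hNpos : 0 < N := Fintype.card_pos
  set K : Set (m → ℝ) := {x | (∀ i, 0 ≤ x i) ∧ ∑ i, x i = 1} with hK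
  -- K is compact
  have hKclosed : IsClosed K := by
    have h1 : IsClosed {x : m → ℝ | ∀ i, 0 ≤ x i} := by
      have : {x : m → ℝ | ∀ i, 0 ≤ x i} = ⋂ i, {x | 0 ≤ x i} := by
        ext x; simp
      rw [this]
      exact isClosed_iInter fun i => isClosed_le continuous_const (continuous_apply i)
    have h2 : IsClosed {x : m → ℝ | ∑ i, x i = 1} :=
      isClosed_eq (by continuity) continuous_const
    exact h1.inter h2
  have hKsub : K ⊆ Metric.closedBall 0 1 := by
    intro x ⟨hx1, hx2⟩
    rw [Metric.mem_closedBall, dist_zero_right]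
    rw [pi_norm_le_iff_of_nonneg zero_le_one]
    intro i
    rw [Real.norm_eq_abs, abs_of_nonneg (hx1 i)]
    calc x i ≤ ∑ j, x j := Finset.single_le_sum (fun j _ => hx1 j) (Finset.mem_univ i)
      _ = 1 := hx2
  have hKcompact : IsCompact K :=
    (isCompact_closedBall (0 : m → ℝ) 1).of_isClosed_subset hKclosed hKsub
  have hKne : K.Nonempty := by
    refine ⟨fun _ => (N:ℝ)⁻¹, fun i => by positivity, ?_⟩
    simp only [Finset.sum_const, Finset.card_univ, nsmul_eq_mul, ← hN]
    rw [mul_inv_cancel₀ (by positivity)]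
  -- the bound
  set C : ℝ := ∑ x : m, ∑ y : m, A x y with hC
  have hbound : ∀ t : ℝ, 0 ≤ t → ∀ x ∈ K, (∀ i, t * x i ≤ A.mulVec x i) → t ≤ C := by
    intro t ht x hx hineq
    obtain ⟨hx1, hx2⟩ := hx
    have hxle1 : ∀ j, x j ≤ 1 := by
      intro j
      calc x j ≤ ∑ i, x i := Finset.single_le_sum (fun i _ => hx1 i) (Finset.mem_univ j)
        _ = 1 := hx2
    calc t = t * ∑ i, x i := by rw [hx2, mul_one]
      _ = ∑ i, t * x i := by rw [Finset.mul_sum]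
      _ ≤ ∑ i, A.mulVec x i := Finset.sum_le_sum fun i _ => hineq i
      _ = ∑ i, ∑ j, A i j * x j := by
          simp [Matrix.mulVec, dotProduct]
      _ ≤ ∑ i, ∑ j, A i j := by
          refine Finset.sum_le_sum fun i _ => Finset.sum_le_sum fun j _ => ?_
          calc A i j * x j ≤ A i j * 1 := by
                exact mul_le_mul_of_nonneg_left (hxle1 j) (hA i j)
            _ = A i j := mul_one _
      _ = C := rfl
  -- the compact feasibility set
  set Φ : Set (ℝ × (m → ℝ)) :=
    {p | p.1 ∈ Set.Icc 0 C ∧ p.2 ∈ K ∧ ∀ i, p.1 * p.2 i ≤ A.mulVec p.2 i} with hΦ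
  have hΦclosed : IsClosed Φ := by
    have h1 : IsClosed {p : ℝ × (m → ℝ) | p.1 ∈ Set.Icc 0 C} :=
      (isClosed_Icc).preimage continuous_fst
    have h2 : IsClosed {p : ℝ × (m → ℝ) | p.2 ∈ K} := hKclosed.preimage continuous_snd
    have h3 : IsClosed {p : ℝ × (m → ℝ) | ∀ i, p.1 * p.2 i ≤ A.mulVec p.2 i} := by
      have : {p : ℝ × (m → ℝ) | ∀ i, p.1 * p.2 i ≤ A.mulVec p.2 i} =
          ⋂ i, {p : ℝ × (m → ℝ) | p.1 * p.2 i ≤ ∑ j, A i j * p.2 j} := by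
        ext p
        simp [Matrix.mulVec, dotProduct]
      rw [this]
      refine isClosed_iInter fun i => isClosed_le ?_ ?_
      · exact continuous_fst.mul ((continuous_apply i).comp continuous_snd)
      · exact continuous_finset_sum _ fun j _ =>
          continuous_const.mul ((continuous_apply j).comp continuous_snd)
    have : Φ = ({p : ℝ × (m → ℝ) | p.1 ∈ Set.Icc 0 C} ∩ {p | p.2 ∈ K}) ∩
        {p : ℝ × (m → ℝ) | ∀ i, p.1 * p.2 i ≤ A.mulVec p.2 i} := by
      ext p
      simp only [hΦ, Set.mem_inter_iff, Set.mem_setOf_eq]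
      tauto
    rw [this]
    exact (h1.inter h2).inter h3
  have hΦcompact : IsCompact Φ := by
    refine IsCompact.of_isClosed_subset
      (IsCompact.prod (isCompact_Icc (a := (0:ℝ)) (b := C)) hKcompact) hΦclosed ?_
    intro p hp
    exact Set.mem_prod.mpr ⟨hp.1, hp.2.1⟩
  set D : Set ℝ := Prod.fst '' Φ with hD
  have hDmem : ∀ t : ℝ, t ∈ D ↔ ∃ x ∈ K, 0 ≤ t ∧ ∀ i, t * x i ≤ A.mulVec x i := by
    intro t
    constructor
    · rintro ⟨⟨t', x⟩, hpx, rfl⟩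
      exact ⟨x, hpx.2.1, hpx.1.1, hpx.2.2⟩
    · rintro ⟨x, hxK, ht0, hineq⟩
      exact ⟨(t, x), ⟨⟨ht0, hbound t ht0 x hxK hineq⟩, hxK, hineq⟩, rfl⟩
  have hDcompact : IsCompact D := hΦcompact.image continuous_fst
  have hDne : D.Nonempty := by
    obtain ⟨x, hxK⟩ := hKne
    refine ⟨0, (hDmem 0).mpr ⟨x, hxK, le_refl 0, fun i => ?_⟩⟩
    rw [zero_mul]
    exact Finset.sum_nonneg fun j _ => mul_nonneg (hA i j) (hxK.1 j)
  set r : ℝ := sSup D with hr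
  have hrD : r ∈ D := hDcompact.sSup_mem hDne
  obtain ⟨x, hxK, hr0, hineq⟩ := (hDmem r).mp hrD
  have hxnn := hxK.1
  have hxne : x ≠ 0 := by
    intro h0
    have := hxK.2
    rw [h0] at this
    simp at this
  -- the boost matrix
  set B : Matrix m m ℝ := ((1:Matrix m m ℝ) + A) ^ (N - 1) with hB
  have hboost : ∀ y : m → ℝ, (∀ i, 0 ≤ y i) → y ≠ 0 → ∀ i, 0 < B.mulVec y i :=
    pf_pos_boost hA hirr
  set y : m → ℝ := A.mulVec x - r • x with hy
  have hynn : ∀ i, 0 ≤ y i := by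
    intro i
    simp only [hy, Pi.sub_apply, Pi.smul_apply, smul_eq_mul, sub_nonneg]
    exact hineq i
  by_cases hy0 : y = 0
  · -- x is an eigenvector; show positivity
    have heig : A.mulVec x = r • x := by
      have := sub_eq_zero.mp hy0
      exact this
    have hpowsmul : ∀ k : ℕ, (((1:Matrix m m ℝ) + A) ^ k).mulVec x = ((1+r)^k) • x := by
      intro k
      induction k with
      | zero => simp [Matrix.one_mulVec]
      | succ k ih =>
        rw [pow_succ', ← Matrix.mulVec_mulVec, ih, Matrix.mulVec_smul,
          Matrix.add_mulVec, Matrix.one_mulVec, heig, pow_succ']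
        ext i
        simp only [Pi.smul_apply, Pi.add_apply, smul_eq_mul]
        ring
    have hBx : B.mulVec x = ((1+r)^(N-1)) • x := hpowsmul (N-1)
    have hxpos : ∀ i, 0 < x i := by
      intro i
      have h1 := hboost x hxnn hxne i
      rw [hBx] at h1
      have h2 : (0:ℝ) < (1+r)^(N-1) := by positivity
      simp only [Pi.smul_apply, smul_eq_mul] at h1
      nlinarith
    exact ⟨r, hr0, x, hxpos, heig⟩
  · -- contradiction: r was not maximal
    exfalso
    set u : m → ℝ := B.mulVec x with hu
    have hupos : ∀ i, 0 < u i := hboost x hxnn hxne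
    set w : m → ℝ := B.mulVec y with hw
    have hwpos : ∀ i, 0 < w i := hboost y hynn hy0
    have hcomm : A * B = B * A := by
      have : Commute A B := Commute.pow_right (by
        exact (Commute.one_right A).add_right (Commute.refl A)) (N-1)
      exact this
    have hAu : A.mulVec u = r • u + w := by
      have hx2 : A.mulVec x = r • x + y := by rw [hy]; abel
      rw [hu, Matrix.mulVec_mulVec, hcomm, ← Matrix.mulVec_mulVec, hx2,
        Matrix.mulVec_add, Matrix.mulVec_smul]
    obtain ⟨i₀, _, hi₀⟩ := Finset.exists_min_image univ (fun i => w i / u i)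
      Finset.univ_nonempty
    set ε : ℝ := w i₀ / u i₀ with hε
    have hεpos : 0 < ε := div_pos (hwpos i₀) (hupos i₀)
    have hkey : ∀ i, (r + ε) * u i ≤ A.mulVec u i := by
      intro i
      have h1 : ε ≤ w i / u i := hi₀ i (Finset.mem_univ i)
      have h2 : ε * u i ≤ w i := by
        calc ε * u i ≤ (w i / u i) * u i :=
              mul_le_mul_of_nonneg_right h1 (hupos i).le
          _ = w i := div_mul_cancel₀ _ (hupos i).ne'
      have h3 : A.mulVec u i = r * u i + w i := by
        rw [hAu]; simp [Pi.add_apply]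
      rw [h3]; nlinarith
    set s : ℝ := ∑ i, u i with hs
    have hspos : 0 < s := Finset.sum_pos (fun i _ => hupos i) Finset.univ_nonempty
    have hx'K : (s⁻¹ • u) ∈ K := by
      constructor
      · intro i
        exact mul_nonneg (inv_nonneg.mpr hspos.le) (hupos i).le
      · simp only [Pi.smul_apply, smul_eq_mul, ← Finset.mul_sum, ← hs]
        exact inv_mul_cancel₀ hspos.ne'
    have hmemD : (r + ε) ∈ D := by
      refine (hDmem _).mpr ⟨s⁻¹ • u, hx'K, by positivity, fun i => ?_⟩
      have h1 : A.mulVec (s⁻¹ • u) = s⁻¹ • A.mulVec u := by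
        rw [Matrix.mulVec_smul]
      rw [h1]
      simp only [Pi.smul_apply, smul_eq_mul]
      rw [mul_comm (r+ε) (s⁻¹ * u i), mul_assoc s⁻¹ (u i) (r+ε)]
      refine mul_le_mul_of_nonneg_left ?_ (inv_nonneg.mpr hspos.le)
      rw [mul_comm]
      exact hkey i
    have : r + ε ≤ r := le_csSup hDcompact.bddAbove hmemD
    linarith
end PFIrrMain



section Spec
variable {m : Type*} [Fintype m] [DecidableEq m] [Nonempty m]

lemma spec_toReal {A : Matrix m m ℝ} (hA : ∀ x y, 0 ≤ A x y) {r : ℝ} (hr : 0 ≤ r)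
    {v : m → ℝ} (hv : ∀ x, 0 < v x) (heig : A.mulVec v = r • v) :
    (specRad A).toReal = r := by
  classical
  set A' : Matrix m m ℂ := A.map Complex.ofReal with hA'
  have hmulVec : ∀ z : m → ℂ, ∀ i, A'.mulVec z i = ∑ j, (A i j : ℂ) * z j := by
    intro z i
    simp [hA', Matrix.mulVec, dotProduct, Matrix.map_apply]
  -- r is in the spectrum
  have hrspec : (r : ℂ) ∈ spectrum ℂ A' := by
    rw [spectrum.mem_iff]
    intro hunit
    rw [Matrix.isUnit_iff_isUnit_det] at hunit
    have hdet : (algebraMap ℂ (Matrix m m ℂ) r - A').det = 0 := by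
      rw [← Matrix.exists_mulVec_eq_zero_iff]
      refine ⟨fun i => (v i : ℂ), ?_, ?_⟩
      · intro h0
        have := congrFun h0 (Classical.arbitrary m)
        simp only [Pi.zero_apply, Complex.ofReal_eq_zero] at this
        exact (hv _).ne' this
      · rw [Algebra.algebraMap_eq_smul_one, Matrix.sub_mulVec,
          Matrix.smul_mulVec, Matrix.one_mulVec]
        ext i
        have h1 : A'.mulVec (fun j => (v j : ℂ)) i = ((A.mulVec v) i : ℂ) := by
          rw [hmulVec]
          simp only [Matrix.mulVec, dotProduct]
          push_cast
          rfl
        simp only [Pi.sub_apply, Pi.smul_apply, smul_eq_mul, h1, heig,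
          Pi.zero_apply]
        push_cast
        ring
    rw [hdet] at hunit
    exact (by simpa using hunit : IsUnit (0:ℂ)).ne_zero rfl
  -- every spectral value has norm at most r
  have hbound : ∀ lam : ℂ, lam ∈ spectrum ℂ A' → ‖lam‖ ≤ r := by
    intro lam hlam
    rw [spectrum.mem_iff] at hlam
    rw [Matrix.isUnit_iff_isUnit_det] at hlam
    have hdet : (algebraMap ℂ (Matrix m m ℂ) lam - A').det = 0 := by
      by_contra h
      exact hlam (isUnit_iff_ne_zero.mpr h)
    obtain ⟨z, hzne, hz0⟩ := (Matrix.exists_mulVec_eq_zero_iff).mpr hdet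
    have heigz : ∀ i, lam * z i = A'.mulVec z i := by
      intro i
      have := congrFun hz0 i
      rw [Algebra.algebraMap_eq_smul_one, Matrix.sub_mulVec,
        Matrix.smul_mulVec, Matrix.one_mulVec] at this
      simp only [Pi.sub_apply, Pi.smul_apply, smul_eq_mul, Pi.zero_apply] at this
      exact sub_eq_zero.mp this
    -- take absolute values
    set za : m → ℝ := fun i => ‖z i‖ with hza
    have hzann : ∀ i, 0 ≤ za i := fun i => norm_nonneg _
    have habs : ∀ i, ‖lam‖ * za i ≤ ∑ j, A i j * za j := by
      intro i
      have h1 : ‖lam * z i‖ = ‖lam‖ * za i := by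
        rw [norm_mul]
      have h2 : ‖A'.mulVec z i‖ ≤ ∑ j, A i j * za j := by
        rw [hmulVec]
        calc ‖∑ j, (A i j : ℂ) * z j‖ ≤ ∑ j, ‖(A i j : ℂ) * z j‖ :=
              norm_sum_le _ _
          _ = ∑ j, A i j * za j := by
              refine Finset.sum_congr rfl fun j _ => ?_
              rw [norm_mul, Complex.norm_real, Real.norm_eq_abs,
                abs_of_nonneg (hA i j)]
      calc ‖lam‖ * za i = ‖lam * z i‖ := h1.symm
        _ = ‖A'.mulVec z i‖ := by rw [heigz i]
        _ ≤ _ := h2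
    -- compare with the positive eigenvector
    obtain ⟨i₀, _, hi₀⟩ := Finset.exists_max_image univ (fun i => za i / v i)
      Finset.univ_nonempty
    set t : ℝ := za i₀ / v i₀ with ht
    have htpos : 0 < t := by
      obtain ⟨j, hj⟩ := Function.ne_iff.mp hzne
      have hzaj : 0 < za j := by
        simpa [hza] using (norm_pos_iff.mpr hj)
      have := hi₀ j (Finset.mem_univ j)
      have h2 : 0 < za j / v j := div_pos hzaj (hv j)
      linarith
    have hle : ∀ j, za j ≤ t * v j := by
      intro j
      have := hi₀ j (Finset.mem_univ j)
      calc za j = (za j / v j) * v j := (div_mul_cancel₀ _ (hv j).ne').symm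
        _ ≤ t * v j := mul_le_mul_of_nonneg_right this (hv j).le
    have hfin : ‖lam‖ * (t * v i₀) ≤ r * (t * v i₀) := by
      have h1 : za i₀ = t * v i₀ := (div_mul_cancel₀ _ (hv i₀).ne').symm
      have h2 := habs i₀
      rw [h1] at h2
      have h3 : ∑ j, A i₀ j * za j ≤ ∑ j, A i₀ j * (t * v j) :=
        Finset.sum_le_sum fun j _ => mul_le_mul_of_nonneg_left (hle j) (hA i₀ j)
      have h4 : ∑ j, A i₀ j * (t * v j) = t * (A.mulVec v i₀) := by
        simp only [Matrix.mulVec, dotProduct, Finset.mul_sum]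
        exact Finset.sum_congr rfl fun j _ => by ring
      have h5 : A.mulVec v i₀ = r * v i₀ := by
        rw [heig]; simp
      calc ‖lam‖ * (t * v i₀) ≤ ∑ j, A i₀ j * za j := h2
        _ ≤ ∑ j, A i₀ j * (t * v j) := h3
        _ = t * (r * v i₀) := by rw [h4, h5]
        _ = r * (t * v i₀) := by ring
    have htv : 0 < t * v i₀ := mul_pos htpos (hv i₀)
    exact le_of_mul_le_mul_right (by linarith) htv
  -- conclude
  have hup : spectralRadius ℂ A' ≤ ENNReal.ofReal r := by
    refine iSup₂_le fun k hk => ?_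
    have := hbound k hk
    simp only [ENNReal.ofReal]
    rw [ENNReal.coe_le_coe]
    exact (Real.le_toNNReal_iff_coe_le (by positivity)).mpr (by
      simpa [coe_nnnorm] using this)
  have hlo : ENNReal.ofReal r ≤ spectralRadius ℂ A' := by
    have h1 : (‖(r:ℂ)‖₊ : ℝ≥0∞) ≤ spectralRadius ℂ A' :=
      le_iSup₂ (f := fun (k:ℂ) (_ : k ∈ spectrum ℂ A') => (‖k‖₊ : ℝ≥0∞)) (r:ℂ) hrspec
    have h2 : ‖(r:ℂ)‖₊ = Real.toNNReal r := by
      ext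
      simp [coe_nnnorm, Complex.norm_real, Real.norm_eq_abs, abs_of_nonneg hr,
        Real.coe_toNNReal r hr]
    rw [ENNReal.ofReal]
    rw [← h2]
    exact h1
  have : specRad A = ENNReal.ofReal r := le_antisymm hup hlo
  rw [this, ENNReal.toReal_ofReal hr]
end Spec


section PFGen
variable {m : Type*} [Fintype m] [DecidableEq m] [Nonempty m]

theorem pf_general {A : Matrix m m ℝ} (hA : ∀ x y, 0 ≤ A x y)
    (hcyc : ∀ w, Relation.TransGen (fun a b => A a b ≠ 0) w w →
        ∀ x, Relation.TransGen (fun a b => A a b ≠ 0) x w)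
    (hex : ∃ w, Relation.TransGen (fun a b => A a b ≠ 0) w w) :
    ∃ r : ℝ, 0 < r ∧ ∃ v : m → ℝ, (∀ x, 0 < v x) ∧ A.mulVec v = r • v := by
  classical
  set E : m → m → Prop := fun a b => A a b ≠ 0 with hE
  set R : Set m := {x | ∀ z, Relation.TransGen E z x} with hR
  obtain ⟨w₀, hw₀cyc⟩ := hex
  have hw₀R : w₀ ∈ R := fun z => hcyc w₀ hw₀cyc z
  have hsucc : ∀ x ∈ R, ∀ y, E x y → y ∈ R := by
    intro x hx y hxy z
    exact (hx z).tail hxy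
  have hRpath : ∀ x ∈ R, ∀ y, Relation.TransGen E x y → y ∈ R := by
    intro x hx y hpath
    induction hpath with
    | single h => exact hsucc x hx _ h
    | tail _ h ih => exact hsucc _ ih _ h
  haveI : Nonempty ↥R := ⟨⟨w₀, hw₀R⟩⟩
  set A₁ : Matrix ↥R ↥R ℝ := Matrix.of (fun x y => A x.1 y.1) with hA₁
  have hA₁nn : ∀ x y : ↥R, 0 ≤ A₁ x y := fun x y => hA x.1 y.1
  -- irreducibility of the restriction
  have hirr₁ : ∀ S : Set ↥R, S.Nonempty → S ≠ Set.univ →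
      ∃ i ∈ S, ∃ j ∉ S, A₁ i j ≠ 0 := by
    intro S hSne hSnu
    obtain ⟨u, hu⟩ := hSne
    obtain ⟨y₀, hy₀⟩ : ∃ y₀ : ↥R, y₀ ∉ S := by
      by_contra h
      push_neg at h
      exact hSnu (Set.eq_univ_of_forall h)
    have hpath : Relation.TransGen E u.1 y₀.1 := y₀.2 u.1
    -- find the exit edge
    have key : ∀ b : m, ∀ a : m, Relation.TransGen E a b →
        ∀ (ha : a ∈ R), (⟨a, ha⟩ : ↥R) ∈ S →
        ∀ (hb : b ∈ R), (⟨b, hb⟩ : ↥R) ∉ S →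
        ∃ i ∈ S, ∃ j ∉ S, A₁ i j ≠ 0 := by
      intro b a hab
      induction hab with
      | single h =>
        intro ha haS hb hbS
        exact ⟨⟨_, ha⟩, haS, ⟨_, hb⟩, hbS, h⟩
      | @tail c b' hac hcb ih =>
        intro ha haS hb hbS
        have hcR : c ∈ R := hRpath _ ha _ hac
        by_cases hcS : (⟨c, hcR⟩ : ↥R) ∈ S
        · exact ⟨⟨c, hcR⟩, hcS, ⟨_, hb⟩, hbS, hcb⟩
        · exact ih ha haS hcR hcS
    exact key y₀.1 u.1 hpath u.2 (by simpa using hu) y₀.2 (by simpa using hy₀)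
  obtain ⟨r, hr0, v₁, hv₁pos, hv₁eig⟩ := pf_irreducible hA₁nn hirr₁
  -- r is positive
  have hrpos : 0 < r := by
    have hx₀ := hw₀cyc
    obtain ⟨z, hz, -⟩ := Relation.TransGen.head'_iff.mp hw₀cyc
    have hzR : z ∈ R := hsucc w₀ hw₀R z hz
    have h1 : A₁ ⟨w₀, hw₀R⟩ ⟨z, hzR⟩ * v₁ ⟨z, hzR⟩ ≤ (A₁.mulVec v₁) ⟨w₀, hw₀R⟩ := by
      simp only [Matrix.mulVec, dotProduct]
      exact Finset.single_le_sum (f := fun y => A₁ ⟨w₀, hw₀R⟩ y * v₁ y)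
        (fun y _ => mul_nonneg (hA₁nn _ y) (hv₁pos y).le) (Finset.mem_univ _)
    have h2 : 0 < A₁ ⟨w₀, hw₀R⟩ ⟨z, hzR⟩ * v₁ ⟨z, hzR⟩ :=
      mul_pos ((hA₁nn _ _).lt_of_ne (Ne.symm hz)) (hv₁pos _)
    have h3 : (A₁.mulVec v₁) ⟨w₀, hw₀R⟩ = r * v₁ ⟨w₀, hw₀R⟩ := by
      rw [hv₁eig]; simp
    nlinarith [hv₁pos ⟨w₀, hw₀R⟩]
  -- the complement part
  set Cp : Set m := {x | x ∉ R} with hCp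
  set ACC : Matrix ↥Cp ↥Cp ℝ := Matrix.of (fun x y => A x.1 y.1) with hACC
  have hACCnn : ∀ x y : ↥Cp, 0 ≤ ACC x y := fun x y => hA x.1 y.1
  set M : ℕ := Fintype.card ↥Cp with hM
  -- chains from powers
  have hchain : ∀ k : ℕ, ∀ x y : ↥Cp, (ACC ^ k) x y ≠ 0 →
      ∃ f : ℕ → ↥Cp, f 0 = x ∧ f k = y ∧ ∀ i < k, E (f i).1 (f (i+1)).1 := by
    intro k
    induction k with
    | zero =>
      intro x y h
      have hxy : x = y := by
        by_contra hne
        rw [pow_zero, Matrix.one_apply_ne hne] at h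
        exact h rfl
      exact ⟨fun _ => x, rfl, by rw [← hxy], fun i hi => absurd hi (by omega)⟩
    | succ k ih =>
      intro x y h
      rw [pow_succ'] at h
      obtain ⟨z, hxz, hzy⟩ := (entry_mul_ne_zero_iff hACCnn (entry_pow_nonneg hACCnn k)).mp h
      obtain ⟨f, hf0, hfk, hfstep⟩ := ih z y hzy
      refine ⟨fun n => Nat.casesOn n x f, rfl, hfk, ?_⟩
      intro i hi
      cases i with
      | zero =>
        have h' : E x.1 z.1 := hxz
        simpa [hf0] using h'
      | succ i => exact hfstep i (by omega)
  -- no cycles in the complement, so ACC is nilpotent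
  have hnil : ACC ^ M = 0 := by
    ext x y
    by_contra h
    obtain ⟨f, hf0, hfM, hfstep⟩ := hchain M x y h
    obtain ⟨a, b, hab, hfab⟩ := Fintype.exists_ne_map_eq_of_card_lt
      (fun i : Fin (M+1) => f i.1) (by simp [hM])
    -- wlog a < b
    have hcycle : ∀ (i dlt : ℕ), 1 ≤ dlt → i + dlt ≤ M →
        Relation.TransGen E (f i).1 (f (i + dlt)).1 := by
      intro i dlt
      induction dlt with
      | zero => omega
      | succ dlt ih2 =>
        intro _ hle
        rcases Nat.eq_or_lt_of_le (Nat.one_le_iff_ne_zero.mpr (Nat.succ_ne_zero dlt)) with h1 | h1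
        · cases dlt with
          | zero => exact Relation.TransGen.single (hfstep i (by omega))
          | succ d => exact (ih2 (by omega) (by omega)).tail (hfstep (i + d + 1) (by omega))
        · cases dlt with
          | zero => exact Relation.TransGen.single (hfstep i (by omega))
          | succ d => exact (ih2 (by omega) (by omega)).tail (hfstep (i + d + 1) (by omega))
    have hvne : a.1 ≠ b.1 := fun hv => hab (Fin.ext hv)
    rcases Nat.lt_or_ge a.1 b.1 with hlt | hge
    · have hc := hcycle a.1 (b.1 - a.1) (by omega) (by omega)
      rw [(by omega : a.1 + (b.1 - a.1) = b.1), ← hfab] at hc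
      exact (f a.1).2 (fun z => hcyc _ hc z)
    · have hlt' : b.1 < a.1 := by omega
      have hc := hcycle b.1 (a.1 - b.1) (by omega) (by omega)
      rw [(by omega : b.1 + (a.1 - b.1) = a.1), hfab] at hc
      exact (f b.1).2 (fun z => hcyc _ hc z)
  -- the source vector from R
  set bv : ↥Cp → ℝ := fun x => ∑ y : ↥R, A x.1 y.1 * v₁ y with hbv
  have hbvnn : ∀ x, 0 ≤ bv x := fun x =>
    Finset.sum_nonneg fun y _ => mul_nonneg (hA _ _) (hv₁pos y).le
  set g : ℕ → (↥Cp → ℝ) := fun k => (r⁻¹)^(k+1) • ((ACC ^ k).mulVec bv) with hg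
  set v₂ : ↥Cp → ℝ := ∑ k ∈ Finset.range M, g k with hv₂
  have hgnn : ∀ k x, 0 ≤ g k x := by
    intro k x
    simp only [hg, Pi.smul_apply, smul_eq_mul]
    refine mul_nonneg (by positivity) ?_
    simp only [Matrix.mulVec, dotProduct]
    exact Finset.sum_nonneg fun y _ =>
      mul_nonneg (entry_pow_nonneg hACCnn k x y) (hbvnn y)
  have hv₂nn : ∀ x, 0 ≤ v₂ x := by
    intro x
    rw [hv₂]
    rw [Finset.sum_apply]
    exact Finset.sum_nonneg fun k _ => hgnn k x
  -- the balance equation r • v₂ = ACC *ᵥ v₂ + bv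
  have hbal : r • v₂ = ACC.mulVec v₂ + bv := by
    have h1 : r • v₂ = ∑ k ∈ Finset.range M, (r⁻¹)^k • ((ACC ^ k).mulVec bv) := by
      rw [hv₂, Finset.smul_sum]
      refine Finset.sum_congr rfl fun k _ => ?_
      rw [hg]
      rw [smul_smul]
      congr 1
      rw [pow_succ]
      field_simp
    have h2 : ACC.mulVec v₂ = ∑ k ∈ Finset.range M, (r⁻¹)^(k+1) • ((ACC ^ (k+1)).mulVec bv) := by
      rw [hv₂]
      have : ACC.mulVec (∑ k ∈ Finset.range M, g k) =
          ∑ k ∈ Finset.range M, ACC.mulVec (g k) := by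
        simp only [← Matrix.mulVecLin_apply]
        rw [map_sum]
      rw [this]
      refine Finset.sum_congr rfl fun k _ => ?_
      rw [hg, Matrix.mulVec_smul, Matrix.mulVec_mulVec, ← pow_succ']
    have h3 : ∑ k ∈ Finset.range M, ((r⁻¹)^k • ((ACC ^ k).mulVec bv)
        - (r⁻¹)^(k+1) • ((ACC ^ (k+1)).mulVec bv)) =
        (r⁻¹)^0 • ((ACC ^ 0).mulVec bv) - (r⁻¹)^M • ((ACC ^ M).mulVec bv) :=
      Finset.sum_range_sub' (fun k => (r⁻¹)^k • ((ACC ^ k).mulVec bv)) M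
    have h4 : (r⁻¹)^M • ((ACC ^ M).mulVec bv) = 0 := by
      rw [hnil]
      simp [Matrix.zero_mulVec]
    have h5 : (r⁻¹)^0 • ((ACC ^ 0).mulVec bv) = bv := by
      simp [Matrix.one_mulVec]
    calc r • v₂ = ∑ k ∈ Finset.range M, (r⁻¹)^k • ((ACC ^ k).mulVec bv) := h1
      _ = ∑ k ∈ Finset.range M, (r⁻¹)^(k+1) • ((ACC ^ (k+1)).mulVec bv) +
          ∑ k ∈ Finset.range M, ((r⁻¹)^k • ((ACC ^ k).mulVec bv)
            - (r⁻¹)^(k+1) • ((ACC ^ (k+1)).mulVec bv)) := by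
          rw [← Finset.sum_add_distrib]
          refine Finset.sum_congr rfl fun k _ => ?_
          abel
      _ = ACC.mulVec v₂ + bv := by rw [h3, h4, h5, ← h2]; abel
  -- positivity of v₂
  have hv₂pos : ∀ x : ↥Cp, 0 < v₂ x := by
    intro x
    -- there is some power k with ((ACC^k).mulVec bv) x ≠ 0
    have hreach : Relation.TransGen E x.1 w₀ := hw₀R x.1
    have hkey : ∀ b₂ : m, b₂ ∈ R → ∀ a : m, Relation.TransGen E a b₂ →
        ∀ (ha : a ∈ Cp), ∃ k, ((ACC ^ k).mulVec bv) ⟨a, ha⟩ ≠ 0 := by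
      intro b₂ hb₂ a hab
      induction hab using Relation.TransGen.head_induction_on with
      | @single a h =>
        intro ha
        refine ⟨0, ?_⟩
        rw [pow_zero, Matrix.one_mulVec]
        have h1 : A a b₂ * v₁ ⟨b₂, hb₂⟩ ≤ bv ⟨a, ha⟩ := by
          rw [hbv]
          exact Finset.single_le_sum (f := fun y : ↥R => A a y.1 * v₁ y)
            (fun y _ => mul_nonneg (hA _ _) (hv₁pos y).le) (Finset.mem_univ ⟨b₂, hb₂⟩)
        have h2 : 0 < A a b₂ * v₁ ⟨b₂, hb₂⟩ :=
          mul_pos ((hA _ _).lt_of_ne (Ne.symm h)) (hv₁pos _)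
        exact (h2.trans_le h1).ne'
      | @head a c hac hcb ih =>
        intro ha
        by_cases hcR : c ∈ R
        · refine ⟨0, ?_⟩
          rw [pow_zero, Matrix.one_mulVec]
          have h1 : A a c * v₁ ⟨c, hcR⟩ ≤ bv ⟨a, ha⟩ := by
            rw [hbv]
            exact Finset.single_le_sum (f := fun y : ↥R => A a y.1 * v₁ y)
              (fun y _ => mul_nonneg (hA _ _) (hv₁pos y).le) (Finset.mem_univ ⟨c, hcR⟩)
          have h2 : 0 < A a c * v₁ ⟨c, hcR⟩ :=
            mul_pos ((hA _ _).lt_of_ne (Ne.symm hac)) (hv₁pos _)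
          exact (h2.trans_le h1).ne'
        · obtain ⟨k, hk⟩ := ih hcR
          refine ⟨k + 1, ?_⟩
          rw [pow_succ', ← Matrix.mulVec_mulVec]
          have hknn : ∀ y, 0 ≤ ACC ⟨a, ha⟩ y * ((ACC ^ k).mulVec bv) y := by
            intro y
            refine mul_nonneg (hACCnn ⟨a, ha⟩ y) ?_
            simp only [Matrix.mulVec, dotProduct]
            exact Finset.sum_nonneg fun w _ =>
              mul_nonneg (entry_pow_nonneg hACCnn k y w) (hbvnn w)
          have hpos : 0 < ACC ⟨a, ha⟩ ⟨c, hcR⟩ * ((ACC ^ k).mulVec bv) ⟨c, hcR⟩ := by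
            refine mul_pos ((hACCnn _ _).lt_of_ne (Ne.symm hac)) ?_
            refine lt_of_le_of_ne ?_ (Ne.symm hk)
            simp only [Matrix.mulVec, dotProduct]
            exact Finset.sum_nonneg fun w _ =>
              mul_nonneg (entry_pow_nonneg hACCnn k _ w) (hbvnn w)
          have h2 : ACC ⟨a, ha⟩ ⟨c, hcR⟩ * ((ACC ^ k).mulVec bv) ⟨c, hcR⟩ ≤
              (ACC.mulVec ((ACC ^ k).mulVec bv)) ⟨a, ha⟩ := by
            simp only [Matrix.mulVec, dotProduct]
            exact Finset.single_le_sum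
              (f := fun y => ACC ⟨a, ha⟩ y * ((ACC ^ k).mulVec bv) y)
              (fun y _ => hknn y) (Finset.mem_univ _)
          exact (hpos.trans_le h2).ne'
    obtain ⟨k, hk⟩ := hkey w₀ hw₀R x.1 hreach x.2
    -- k must be < M since higher powers vanish
    have hkM : k < M := by
      by_contra hge
      push_neg at hge
      have : ACC ^ k = 0 := by
        have : ACC ^ k = ACC ^ M * ACC ^ (k - M) := by
          rw [← pow_add]
          congr 1
          omega
        rw [this, hnil, Matrix.zero_mul]
      rw [this, Matrix.zero_mulVec] at hk
      exact hk rfl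
    have hterm : 0 < g k x := by
      simp only [hg, Pi.smul_apply, smul_eq_mul]
      refine mul_pos (by positivity) ?_
      refine lt_of_le_of_ne ?_ (Ne.symm hk)
      simp only [Matrix.mulVec, dotProduct]
      exact Finset.sum_nonneg fun w _ =>
        mul_nonneg (entry_pow_nonneg hACCnn k _ w) (hbvnn w)
    have : g k x ≤ v₂ x := by
      rw [hv₂, Finset.sum_apply]
      exact Finset.single_le_sum (f := fun j => g j x)
        (fun j _ => hgnn j x) (Finset.mem_range.mpr hkM)
    linarith
  -- assemble the global eigenvector
  set v : m → ℝ := fun x => if h : x ∈ R then v₁ ⟨x, h⟩ else v₂ ⟨x, h⟩ with hv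
  have hvpos : ∀ x, 0 < v x := by
    intro x
    by_cases h : x ∈ R
    · simpa [hv, h] using hv₁pos ⟨x, h⟩
    · simpa [hv, h] using hv₂pos ⟨x, h⟩
  refine ⟨r, hrpos, v, hvpos, ?_⟩
  have hvR : ∀ (y : m) (hy : y ∈ R), v y = v₁ ⟨y, hy⟩ := fun y hy => by
    simp [hv, hy]
  have hvC : ∀ (y : m) (hy : y ∉ R), v y = v₂ ⟨y, hy⟩ := fun y hy => by
    simp [hv, hy]
  have hsplitsum : ∀ x : m, (A.mulVec v) x =
      (∑ y : ↥R, A x y.1 * v₁ y) + (∑ y : ↥Cp, A x y.1 * v₂ y) := by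
    intro x
    simp only [Matrix.mulVec, dotProduct]
    rw [← Finset.sum_filter_add_sum_filter_not Finset.univ (fun y => y ∈ R)
      (fun y => A x y * v y)]
    congr 1
    · rw [Finset.sum_subtype (p := fun y => y ∈ R) (Finset.univ.filter (fun y => y ∈ R))
        (by intro y; simp) (fun y => A x y * v y)]
      exact Finset.sum_congr rfl fun y _ => by rw [hvR y.1 y.2]
    · rw [Finset.sum_subtype (p := fun y => y ∈ Cp) (Finset.univ.filter (fun y => ¬ y ∈ R))
        (by intro y; simp [hCp]) (fun y => A x y * v y)]
      exact Finset.sum_congr rfl fun y _ => by rw [hvC y.1 y.2]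
  funext x
  by_cases hx : x ∈ R
  · -- rows in R : no edges into the complement
    have hzero : ∀ y : ↥Cp, A x y.1 * v₂ y = 0 := by
      intro y
      have : A x y.1 = 0 := by
        by_contra hne
        exact y.2 (hsucc x hx y.1 hne)
      rw [this, zero_mul]
    have h1 : (A.mulVec v) x = ∑ y : ↥R, A x y.1 * v₁ y := by
      rw [hsplitsum x, Finset.sum_eq_zero (fun y _ => hzero y), add_zero]
    have h2 : (∑ y : ↥R, A₁ ⟨x, hx⟩ y * v₁ y) = r * v₁ ⟨x, hx⟩ := by
      have := congrFun hv₁eig ⟨x, hx⟩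
      simpa [Matrix.mulVec, dotProduct] using this
    have h3 : (∑ y : ↥R, A x y.1 * v₁ y) = ∑ y : ↥R, A₁ ⟨x, hx⟩ y * v₁ y := rfl
    rw [h1, h3, h2]
    simp only [Pi.smul_apply, smul_eq_mul]
    rw [hvR x hx]
  · -- rows in the complement
    have h1 : (∑ y : ↥Cp, A x y.1 * v₂ y) = (ACC.mulVec v₂) ⟨x, hx⟩ := by
      simp only [Matrix.mulVec, dotProduct]
      rfl
    have h2 : (∑ y : ↥R, A x y.1 * v₁ y) = bv ⟨x, hx⟩ := rfl
    have h3 := congrFun hbal ⟨x, hx⟩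
    simp only [Pi.smul_apply, Pi.add_apply, smul_eq_mul] at h3
    rw [hsplitsum x, h1, h2]
    simp only [Pi.smul_apply, smul_eq_mul]
    rw [hvC x hx]
    linarith
end PFGen
section Iter
variable {n d : ℕ} (BJ : Matrix (Fin n) (Fin n) ℝ)
  (Bs : Fin (d + 1) → Matrix (Fin n) (Fin n) ℝ)

theorem iter_main (hpos : ∀ i j, 0 ≤ BJ i j)
    (hirr : IsIrreducibleMatrix BJ)
    (hsplit : IsSplitting BJ Bs) :
    ∃ v : Fin (d + 1) × Fin n → ℝ, (∀ x, 0 < v x) ∧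
      (iterMat Bs).mulVec v = (specRad (iterMat Bs)).toReal • v := by
  classical
  obtain ⟨hne, hsum, hdisj⟩ := hsplit
  -- n is positive
  have hn : 0 < n := by
    by_contra h
    push_neg at h
    interval_cases n
    exact hne 0 (by ext i j; exact absurd i.2 (by omega))
  haveI : NeZero n := ⟨by omega⟩
  -- the parts are nonnegative
  have hBsnn : ∀ p i j, 0 ≤ Bs p i j := by
    intro p i j
    rcases eq_or_ne (Bs p i j) 0 with h | h
    · rw [h]
    · have hzero : ∀ q, q ≠ p → Bs q i j = 0 := by
        intro q hq
        have := congrFun (congrFun (hdisj p q (Ne.symm hq)) i) j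
        simp only [Matrix.hadamard_apply, Matrix.zero_apply] at this
        rcases mul_eq_zero.mp this with h' | h'
        · exact absurd h' h
        · exact h'
      have hBJ : BJ i j = Bs p i j := by
        rw [← hsum, Matrix.sum_apply]
        exact Finset.sum_eq_single p (fun q _ hq => hzero q hq) (by simp)
      rw [← hBJ]
      exact hpos i j
  set L := blockL Bs with hL
  set U := blockU Bs with hU
  have hLnn : ∀ x y, 0 ≤ L x y := by
    intro x y
    rw [hL]
    simp only [blockL, Matrix.of_apply]
    split
    · exact hBsnn _ _ _
    · exact le_refl 0
  have hUnn : ∀ x y, 0 ≤ U x y := by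
    intro x y
    rw [hU]
    simp only [blockU, Matrix.of_apply]
    split
    · exact hBsnn _ _ _
    · exact le_refl 0
  have hLne : ∀ x y : Fin (d+1) × Fin n, L x y ≠ 0 ↔ (y.1 < x.1 ∧ Bs y.1 x.2 y.2 ≠ 0) := by
    intro x y
    rw [hL]
    simp only [blockL, Matrix.of_apply]
    split
    · simp_all
    · simp_all
  have hUne : ∀ x y : Fin (d+1) × Fin n, U x y ≠ 0 ↔ (x.1 ≤ y.1 ∧ Bs y.1 x.2 y.2 ≠ 0) := by
    intro x y
    rw [hU]
    simp only [blockU, Matrix.of_apply]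
    split
    · simp_all
    · simp_all
  -- powers of L decrease the block index
  have hLpow : ∀ k : ℕ, ∀ x y : Fin (d+1) × Fin n, (L ^ k) x y ≠ 0 →
      y.1.val + k ≤ x.1.val := by
    intro k
    induction k with
    | zero =>
      intro x y h
      have : x = y := by
        by_contra hxy
        rw [pow_zero, Matrix.one_apply_ne hxy] at h
        exact h rfl
      rw [this]
      omega
    | succ k ih =>
      intro x y h
      rw [pow_succ'] at h
      obtain ⟨z, hxz, hzy⟩ := (entry_mul_ne_zero_iff hLnn (entry_pow_nonneg hLnn k)).mp h
      have h1 := (hLne x z).mp hxz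
      have h2 := ih z y hzy
      have : z.1.val < x.1.val := h1.1
      omega
  have hLnil : L ^ (d + 1) = 0 := by
    ext x y
    rw [Matrix.zero_apply]
    by_contra h
    have := hLpow (d+1) x y h
    have := x.1.2
    omega
  -- Neumann series for the inverse
  set S := ∑ k ∈ Finset.range (d+1), L ^ k with hS
  have hSinv : (1 - L) * S = 1 := by
    have h1 := mul_geom_sum L (d+1)
    rw [hLnil] at h1
    have h2 : (1 - L) * S = -((L - 1) * S) := by
      rw [← neg_mul, neg_sub]
    rw [h2, hS, h1]
    simp
  have hBeq : iterMat Bs = ∑ k ∈ Finset.range (d+1), (L ^ k) * U := by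
    rw [iterMat, ← hU, ← hL, Matrix.inv_eq_right_inv hSinv, ← Finset.sum_mul, hS]
  set B := iterMat Bs with hB
  have hBnn : ∀ x y, 0 ≤ B x y := by
    intro x y
    rw [hBeq, Matrix.sum_apply]
    exact Finset.sum_nonneg fun k _ =>
      entry_mul_nonneg (entry_pow_nonneg hLnn k) hUnn x y
  -- chains
  set lEdge : (Fin (d+1) × Fin n) → (Fin (d+1) × Fin n) → Prop :=
    fun a b => L a b ≠ 0 with hlEdge
  set lchain := Relation.ReflTransGen lEdge with hlchain
  have hpowchain : ∀ k : ℕ, ∀ x z, (L ^ k) x z ≠ 0 → lchain x z := by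
    intro k
    induction k with
    | zero =>
      intro x z h
      have : x = z := by
        by_contra hxy
        rw [pow_zero, Matrix.one_apply_ne hxy] at h
        exact h rfl
      rw [this]
    | succ k ih =>
      intro x z h
      rw [pow_succ'] at h
      obtain ⟨w, hxw, hwz⟩ := (entry_mul_ne_zero_iff hLnn (entry_pow_nonneg hLnn k)).mp h
      exact Relation.ReflTransGen.head hxw (ih w z hwz)
  have hchainpow : ∀ x z, lchain x z → ∃ k, (L ^ k) x z ≠ 0 := by
    intro x z h
    induction h with
    | refl =>
      refine ⟨0, ?_⟩
      rw [pow_zero, Matrix.one_apply_eq]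
      exact one_ne_zero
    | @tail w z hxw hwz ih =>
      obtain ⟨k, hk⟩ := ih
      refine ⟨k + 1, ?_⟩
      rw [pow_succ]
      exact (entry_mul_ne_zero_iff (entry_pow_nonneg hLnn k) hLnn).mpr ⟨w, hk, hwz⟩
  -- characterization of the edges of the iteration matrix
  have hBiff : ∀ x y, B x y ≠ 0 ↔ ∃ z, lchain x z ∧ U z y ≠ 0 := by
    intro x y
    constructor
    · intro h
      rw [hBeq, Matrix.sum_apply] at h
      obtain ⟨k, _, hk⟩ := Finset.exists_ne_zero_of_sum_ne_zero h
      obtain ⟨z, hxz, hzy⟩ :=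
        (entry_mul_ne_zero_iff (entry_pow_nonneg hLnn k) hUnn).mp hk
      exact ⟨z, hpowchain k x z hxz, hzy⟩
    · rintro ⟨z, hxz, hzy⟩
      obtain ⟨k, hk⟩ := hchainpow x z hxz
      have hkd : k < d + 1 := by
        have h1 := hLpow k x z hk
        have h2 := x.1.2
        omega
      have hterm : 0 < ((L ^ k) * U) x y := by
        have := (entry_mul_ne_zero_iff (entry_pow_nonneg hLnn k) hUnn).mpr ⟨z, hk, hzy⟩
        exact (entry_mul_nonneg (entry_pow_nonneg hLnn k) hUnn x y).lt_of_ne (Ne.symm this)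
      have hpos : 0 < B x y := by
        rw [hBeq, Matrix.sum_apply]
        refine Finset.sum_pos' (fun j _ => entry_mul_nonneg (entry_pow_nonneg hLnn j) hUnn x y)
          ⟨k, Finset.mem_range.mpr hkd, hterm⟩
      exact hpos.ne'
  -- pending walks
  set stepRel : (Fin (d+1) × Fin n) → (Fin (d+1) × Fin n) → Prop :=
    fun a b => Bs b.1 a.2 b.2 ≠ 0 with hstepRel
  set pend := Relation.ReflTransGen stepRel with hpend
  set BEdge : (Fin (d+1) × Fin n) → (Fin (d+1) × Fin n) → Prop :=
    fun a b => B a b ≠ 0 with hBEdge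
  have hLstep : ∀ a b, lEdge a b → stepRel a b := by
    intro a b h
    exact ((hLne a b).mp h).2
  have hUstep : ∀ a b, U a b ≠ 0 → stepRel a b := by
    intro a b h
    exact ((hUne a b).mp h).2
  -- decomposition of pending walks
  have hdecomp : ∀ x w, pend x w →
      ∃ v, Relation.ReflTransGen BEdge x v ∧ lchain v w := by
    intro x w h
    induction h with
    | refl => exact ⟨x, Relation.ReflTransGen.refl, Relation.ReflTransGen.refl⟩
    | @tail w' w hxw' hstep ih =>
      obtain ⟨v, hbv, hlv⟩ := ih
      by_cases hlt : w.1 < w'.1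
      · refine ⟨v, hbv, hlv.tail ?_⟩
        exact (hLne w' w).mpr ⟨hlt, hstep⟩
      · have hle : w'.1 ≤ w.1 := le_of_not_gt hlt
        have hUe : U w' w ≠ 0 := (hUne w' w).mpr ⟨hle, hstep⟩
        have hBe : BEdge v w := (hBiff v w).mpr ⟨w', hlv, hUe⟩
        exact ⟨w, hbv.tail hBe, Relation.ReflTransGen.refl⟩
  have hR1a : ∀ x y, (∃ w, pend x w ∧ U w y ≠ 0) → Relation.TransGen BEdge x y := by
    rintro x y ⟨w, hxw, hUe⟩
    obtain ⟨v, hbv, hlv⟩ := hdecomp x w hxw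
    exact Relation.TransGen.tail' hbv ((hBiff v y).mpr ⟨w, hlv, hUe⟩)
  have hR1b : ∀ x y, Relation.TransGen BEdge x y → ∃ w, pend x w ∧ U w y ≠ 0 := by
    intro x y h
    induction h with
    | single h1 =>
      obtain ⟨z, hxz, hUz⟩ := (hBiff _ _).mp h1
      exact ⟨z, Relation.ReflTransGen.mono hLstep _ _ hxz, hUz⟩
    | @tail z y hxz hzy ih =>
      obtain ⟨w, hxw, hUw⟩ := ih
      have hxz' : pend x z := hxw.tail (hUstep w z hUw)
      obtain ⟨w', hzw', hUw'⟩ := (hBiff _ _).mp hzy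
      exact ⟨w', hxz'.trans (Relation.ReflTransGen.mono hLstep _ _ hzw'), hUw'⟩
  -- strong connectivity of the pending-walk graph on base vertices
  have hpart : ∀ i j : Fin n, BJ i j ≠ 0 → ∃ q, Bs q i j ≠ 0 := by
    intro i j hBJ
    rw [← hsum, Matrix.sum_apply] at hBJ
    obtain ⟨q, _, hq⟩ := Finset.exists_ne_zero_of_sum_ne_zero hBJ
    exact ⟨q, hq⟩
  have hSC : ∀ (x : Fin (d+1) × Fin n) (j : Fin n), ∃ p, pend x (p, j) := by
    intro x j
    set T : Set (Fin n) := {j | ∃ p, pend x (p, j)} with hT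
    have hxT : x.2 ∈ T := ⟨x.1, Relation.ReflTransGen.refl⟩
    have hclosed : ∀ i ∈ T, ∀ j', BJ i j' ≠ 0 → j' ∈ T := by
      rintro i ⟨p, hp⟩ j' hBJ
      obtain ⟨q, hq⟩ := hpart i j' hBJ
      exact ⟨q, hp.tail hq⟩
    by_cases hTu : T = Set.univ
    · exact Set.eq_univ_iff_forall.mp hTu j
    · obtain ⟨i, hiT, j', hj'T, hBJ⟩ := hirr T ⟨x.2, hxT⟩ hTu
      exact absurd (hclosed i hiT j' hBJ) hj'T
  -- every vertex on a cycle is reachable from everywhere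
  have hcyc : ∀ w, Relation.TransGen BEdge w w → ∀ x, Relation.TransGen BEdge x w := by
    intro w hw x
    obtain ⟨pi, hpend, hUe⟩ := hR1b w w hw
    apply hR1a
    rcases Relation.ReflTransGen.cases_head hpend with heq | ⟨c, hstep1, hrest⟩
    · -- w itself carries a self-loop in the base graph
      subst heq
      obtain ⟨p', hp'⟩ := hSC x w.2
      exact ⟨w, hp'.tail (hUstep w w hUe), hUe⟩
    · obtain ⟨p', hp'⟩ := hSC x w.2
      have hstep2 : stepRel (p', w.2) c := hstep1
      exact ⟨pi, (hp'.tail hstep2).trans hrest, hUe⟩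
  -- existence of a cycle
  haveI : Nonempty (Fin n) := ⟨⟨0, hn⟩⟩
  have hout : ∀ i : Fin n, ∃ q j, Bs q i j ≠ 0 := by
    intro i
    by_cases hexj : ∃ j : Fin n, j ≠ i
    · obtain ⟨i', hi', j, hj, hBJ⟩ := hirr {i} ⟨i, rfl⟩ (by
        intro h
        obtain ⟨j, hjne⟩ := hexj
        exact hjne (Set.eq_univ_iff_forall.mp h j))
      obtain ⟨q, hq⟩ := hpart i' j hBJ
      rw [Set.mem_singleton_iff] at hi'
      subst hi'
      exact ⟨q, j, hq⟩
    · push_neg at hexj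
      have h0 : Bs 0 ≠ 0 := hne 0
      have hab : ∃ a b, Bs 0 a b ≠ 0 := by
        by_contra h
        push_neg at h
        exact h0 (by ext a b; exact h a b)
      obtain ⟨a, b, hab⟩ := hab
      rw [hexj a, hexj b] at hab
      exact ⟨0, i, hab⟩
  choose σ τ hστ using hout
  set i₀ : Fin n := ⟨0, hn⟩ with hi₀
  set orb : ℕ → Fin n := fun t => τ^[t] i₀ with horb
  have horbsucc : ∀ t, orb (t + 1) = τ (orb t) := by
    intro t
    rw [horb]
    exact Function.iterate_succ_apply' τ t i₀
  obtain ⟨as, bs, habne, hfab⟩ := Fintype.exists_ne_map_eq_of_card_lt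
    (fun t : Fin (n+1) => orb t.1) (by simp)
  have hvalne : as.1 ≠ bs.1 := fun h => habne (Fin.ext h)
  obtain ⟨t, s, ht, hs, horbts⟩ : ∃ t s : ℕ, t < s ∧ s ≤ n ∧ orb t = orb s := by
    rcases Nat.lt_or_ge as.1 bs.1 with h | h
    · exact ⟨as.1, bs.1, h, by omega, hfab⟩
    · exact ⟨bs.1, as.1, by omega, by omega, hfab.symm⟩
  have hper : ∀ u, t ≤ u → orb (u + (s - t)) = orb u := by
    intro u hu
    have e1 : u + (s - t) = (u - t) + s := by omega
    have e2 : (u - t) + t = u := by omega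
    have h3 : τ^[s] i₀ = τ^[t] i₀ := by
      have h4 := horbts
      simp only [horb] at h4
      exact h4.symm
    calc orb (u + (s - t)) = τ^[(u-t) + s] i₀ := by simp only [horb, e1]
      _ = τ^[u-t] (τ^[s] i₀) := Function.iterate_add_apply τ (u-t) s i₀
      _ = τ^[u-t] (τ^[t] i₀) := by rw [h3]
      _ = τ^[(u-t)+t] i₀ := (Function.iterate_add_apply τ (u-t) t i₀).symm
      _ = orb u := by simp only [horb, e2]
  set rr := s - t with hrr
  have hrr1 : 1 ≤ rr := by omega
  obtain ⟨us, husmem, husmax⟩ := Finset.exists_max_image (Finset.Ico t s)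
    (fun u => σ (orb u)) ⟨t, Finset.mem_Ico.mpr ⟨le_refl t, ht⟩⟩
  have hust : t ≤ us := (Finset.mem_Ico.mp husmem).1
  have huss : us < s := (Finset.mem_Ico.mp husmem).2
  set av : Fin n := orb us with hav
  set qv : Fin (d+1) := σ av with hqv
  set wv : Fin (d+1) × Fin n := (qv, orb (us+1)) with hwv
  -- walking along the orbit
  have hwalk : ∀ (P : Fin (d+1)) (u k : ℕ), 1 ≤ k →
      pend (P, orb u) (σ (orb (u+k-1)), orb (u+k)) := by
    intro P u k hk
    induction k with
    | zero => omega
    | succ k ih =>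
      rcases Nat.eq_or_lt_of_le hk with h1 | h1
      · have hk0 : k = 0 := by omega
        subst hk0
        refine Relation.ReflTransGen.single ?_
        show Bs (σ (orb (u+1-1))) (orb u) (orb (u+1)) ≠ 0
        rw [horbsucc u]
        simpa using hστ (orb u)
      · have hk1 : 1 ≤ k := by omega
        refine (ih hk1).tail ?_
        show Bs (σ (orb (u+(k+1)-1))) (orb (u+k)) (orb (u+(k+1))) ≠ 0
        have e3 : u+(k+1)-1 = u+k := by omega
        have e4 : u+(k+1) = (u+k)+1 := by omega
        rw [e3, e4, horbsucc (u+k)]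
        exact hστ (orb (u+k))
  have horbper : orb (us + rr) = av := by
    rw [hav]
    exact hper us hust
  have htauav : orb (us + 1) = τ av := by
    rw [horbsucc us, hav]
  have hUlast : ∀ p' : Fin (d+1), p' ≤ qv → U (p', av) wv ≠ 0 := by
    intro p' hp'
    refine (hUne (p', av) wv).mpr ⟨hp', ?_⟩
    show Bs qv av (orb (us+1)) ≠ 0
    rw [htauav, hqv]
    exact hστ av
  have hexcyc : ∃ w, Relation.TransGen BEdge w w := by
    refine ⟨wv, hR1a wv wv ?_⟩
    rcases Nat.eq_or_lt_of_le hrr1 with hr1 | hr2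
    · -- period 1 : self-loop
      have h1 : orb (us + 1) = av := by
        rw [(by omega : us + 1 = us + rr), horbper]
      refine ⟨wv, Relation.ReflTransGen.refl, ?_⟩
      have := hUlast qv (le_refl qv)
      rw [hwv, h1] at *
      exact this
    · -- go around the cycle
      have h1 := hwalk qv (us+1) (rr-1) (by omega)
      have e5 : us+1+(rr-1)-1 = us+rr-1 := by omega
      have e6 : us+1+(rr-1) = us+rr := by omega
      rw [e5, e6, horbper] at h1
      refine ⟨(σ (orb (us+rr-1)), av), h1, hUlast _ ?_⟩
      rcases Nat.eq_or_lt_of_le hust with h2 | h2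
      · -- us = t : the predecessor is s - 1
        have e7 : us+rr-1 = s-1 := by omega
        rw [e7]
        exact husmax (s-1) (Finset.mem_Ico.mpr ⟨by omega, by omega⟩)
      · -- t < us : the predecessor is us - 1
        have e8 : us+rr-1 = (us-1) + rr := by omega
        have e9 : orb ((us-1) + rr) = orb (us-1) := hper (us-1) (by omega)
        rw [e8, e9]
        exact husmax (us-1) (Finset.mem_Ico.mpr ⟨by omega, by omega⟩)
  -- apply the general Perron theorem
  obtain ⟨r, hrpos, v, hvpos, heig⟩ := pf_general hBnn hcyc hexcyc
  have hspec : (specRad B).toReal = r := spec_toReal hBnn hrpos.le hvpos heig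
  exact ⟨v, hvpos, by rw [hspec]; exact heig⟩
end Iter

/-- If `B_J` is irreducible and nonnegative, the iteration matrix of any
splitting of `B_J` has a strictly positive Perron eigenvector for its
spectral radius. -/
theorem positive_perron_eigenvector (n d : ℕ) (BJ : Matrix (Fin n) (Fin n) ℝ)
    (hpos : ∀ i j, 0 ≤ BJ i j) (hirr : IsIrreducibleMatrix BJ)
    (Bs : Fin (d + 1) → Matrix (Fin n) (Fin n) ℝ)
    (hsplit : IsSplitting BJ Bs) :
    ∃ v : Fin (d + 1) × Fin n → ℝ, (∀ x, 0 < v x) ∧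
      (iterMat Bs).mulVec v = (specRad (iterMat Bs)).toReal • v := by
  exact iter_main BJ Bs hpos hirr hsplit
end

section
/- Let B_J and B̃_J be n×n Jacobi iteration matrices with O ≤ B_J ≤ B̃_J entrywise, and let (B₁,...,B_d) and (B̃₁,...,B̃_d) be their splittings corresponding to the same splitting mask. Then the associated iteration matrices satisfy O ≤ 𝓑_{(d)} ≤ 𝓑̃_{(d)} entrywise, and consequently ρ(𝓑_{(d)}) ≤ ρ(𝓑̃_{(d)}). -/
/-
Every entry of `𝓛 = 𝓛_{(d)}` and `𝓤` is an entry of some `B_p = M_p ∘ B_J`, so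
`O ≤ 𝓛 ≤ 𝓛̃` and `O ≤ 𝓤 ≤ 𝓤̃` entrywise. Since `𝓛` is strictly block lower triangular it is
nilpotent, so `(𝓘 - 𝓛)⁻¹ = ∑_{k<d} 𝓛ᵏ` is a polynomial with nonnegative coefficients in `𝓛`;
sums and products preserve `0 ≤ · ≤ ·` entrywise, which gives `O ≤ 𝓑 ≤ 𝓑̃`. Entrywise
domination of nonnegative matrices carries over to all powers and to their `∞`-operator norms,
and Gelfand's formula turns this into `ρ(𝓑) ≤ ρ(𝓑̃)`.
-/

open Matrix

namespace Matrix

section NonnegLE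

variable {l m n R : Type*} [Semiring R] [PartialOrder R] [IsOrderedRing R]

def NonnegLE (A B : Matrix m n R) : Prop :=
  ∀ i j, 0 ≤ A i j ∧ A i j ≤ B i j

theorem NonnegLE.mul [Fintype m] {A A' : Matrix l m R} {B B' : Matrix m n R}
    (hA : NonnegLE A A') (hB : NonnegLE B B') : NonnegLE (A * B) (A' * B') := fun i j =>
  ⟨Finset.sum_nonneg fun k _ => mul_nonneg (hA i k).1 (hB k j).1,
    Finset.sum_le_sum fun k _ =>
      mul_le_mul (hA i k).2 (hB k j).2 (hB k j).1 ((hA i k).1.trans (hA i k).2)⟩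

theorem NonnegLE.sum {ι : Type*} {s : Finset ι} {A B : ι → Matrix m n R}
    (h : ∀ k ∈ s, NonnegLE (A k) (B k)) : NonnegLE (∑ k ∈ s, A k) (∑ k ∈ s, B k) := by
  intro i j
  simp only [Matrix.sum_apply]
  exact ⟨Finset.sum_nonneg fun k hk => (h k hk i j).1,
    Finset.sum_le_sum fun k hk => (h k hk i j).2⟩

theorem NonnegLE.hadamard_left {M A B : Matrix m n R} (hM : ∀ i j, 0 ≤ M i j)
    (h : NonnegLE A B) : NonnegLE (M ⊙ A) (M ⊙ B) := fun i j =>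
  ⟨mul_nonneg (hM i j) (h i j).1, mul_le_mul_of_nonneg_left (h i j).2 (hM i j)⟩

variable [DecidableEq m]

theorem NonnegLE.one : NonnegLE (1 : Matrix m m R) 1 := by
  intro i j
  rcases eq_or_ne i j with rfl | h
  · simp
  · simp [one_apply_ne h]

theorem NonnegLE.pow [Fintype m] {A B : Matrix m m R} (h : NonnegLE A B) (k : ℕ) :
    NonnegLE (A ^ k) (B ^ k) := by
  induction k with
  | zero => simpa using NonnegLE.one
  | succ k ih => simpa only [pow_succ] using ih.mul h

end NonnegLE

end Matrix

section SpectralRadius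

variable {m : Type*} [Fintype m] [DecidableEq m]

-- Gelfand's formula holds for any algebra norm; the `∞`-operator norm is the one that is
-- monotone in the entries of a nonnegative matrix.
attribute [local instance] Matrix.linftyOpNormedRing Matrix.linftyOpNormedAlgebra

theorem Matrix.NonnegLE.linfty_opNNNorm_map_ofReal_le {A B : Matrix m m ℝ} (h : NonnegLE A B) :
    ‖A.map Complex.ofReal‖₊ ≤ ‖B.map Complex.ofReal‖₊ := by
  rw [linfty_opNNNorm_def, linfty_opNNNorm_def]
  refine Finset.sup_mono_fun fun i _ => Finset.sum_le_sum fun j _ => ?_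
  simp only [map_apply, Complex.nnnorm_real]
  rw [Real.nnnorm_of_nonneg (h i j).1, Real.nnnorm_of_nonneg ((h i j).1.trans (h i j).2)]
  exact (h i j).2

theorem Matrix.NonnegLE.specRad_le {A B : Matrix m m ℝ} (h : NonnegLE A B) :
    specRad A ≤ specRad B := by
  have : CompleteSpace (Matrix m m ℂ) := FiniteDimensional.complete ℂ _
  refine le_of_tendsto_of_tendsto'
    (spectrum.pow_nnnorm_pow_one_div_tendsto_nhds_spectralRadius _)
    (spectrum.pow_nnnorm_pow_one_div_tendsto_nhds_spectralRadius _) fun k => ?_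
  have hpow (C : Matrix m m ℝ) : (C ^ k).map Complex.ofReal = C.map Complex.ofReal ^ k :=
    C.map_pow Complex.ofRealHom k
  have hk := (h.pow k).linfty_opNNNorm_map_ofReal_le
  rw [hpow, hpow] at hk
  gcongr

end SpectralRadius

section Splitting

variable {n d : ℕ}

theorem blockL_pow_apply_eq_zero (Bs : Fin d → Matrix (Fin n) (Fin n) ℝ) (k : ℕ)
    (x y : Fin d × Fin n) (hxy : (x.1 : ℕ) < y.1 + k) : (blockL Bs ^ k) x y = 0 := by
  induction k generalizing x with
  | zero => exact one_apply_ne (by rintro rfl; omega)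
  | succ k ih =>
    rw [pow_succ', mul_apply]
    refine Finset.sum_eq_zero fun z _ => ?_
    by_cases hzx : z.1 < x.1
    · rw [ih z (by omega), mul_zero]
    · simp [blockL, hzx]

theorem blockL_pow_card_eq_zero (Bs : Fin d → Matrix (Fin n) (Fin n) ℝ) : blockL Bs ^ d = 0 := by
  ext x y
  exact blockL_pow_apply_eq_zero Bs d x y (by omega)

theorem inv_one_sub_blockL (Bs : Fin d → Matrix (Fin n) (Fin n) ℝ) :
    (1 - blockL Bs)⁻¹ = ∑ k ∈ Finset.range d, blockL Bs ^ k :=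
  inv_eq_right_inv <| by rw [mul_neg_geom_sum, blockL_pow_card_eq_zero, sub_zero]

variable {Bs Bts : Fin d → Matrix (Fin n) (Fin n) ℝ}

theorem nonnegLE_blockL (h : ∀ p, NonnegLE (Bs p) (Bts p)) :
    NonnegLE (blockL Bs) (blockL Bts) := by
  intro x y
  simp only [blockL, of_apply]
  split_ifs
  exacts [h _ _ _, ⟨le_rfl, le_rfl⟩]

theorem nonnegLE_blockU (h : ∀ p, NonnegLE (Bs p) (Bts p)) :
    NonnegLE (blockU Bs) (blockU Bts) := by
  intro x y
  simp only [blockU, of_apply]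
  split_ifs
  exacts [h _ _ _, ⟨le_rfl, le_rfl⟩]

theorem nonnegLE_iterMat (h : ∀ p, NonnegLE (Bs p) (Bts p)) :
    NonnegLE (iterMat Bs) (iterMat Bts) := by
  unfold iterMat
  rw [inv_one_sub_blockL, inv_one_sub_blockL]
  exact (NonnegLE.sum fun k _ => (nonnegLE_blockL h).pow k).mul (nonnegLE_blockU h)

end Splitting

theorem monotonicity_of_splittings_general (n d : ℕ)
    (BJ BtJ : Matrix (Fin n) (Fin n) ℝ)
    (hord : ∀ i j, 0 ≤ BJ i j ∧ BJ i j ≤ BtJ i j)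
    (M : Fin d → Matrix (Fin n) (Fin n) ℝ)
    (hM01 : ∀ p i j, M p i j = 0 ∨ M p i j = 1)
    (Bs Bts : Fin d → Matrix (Fin n) (Fin n) ℝ)
    (hBs : ∀ p, Bs p = Matrix.hadamard (M p) BJ)
    (hBts : ∀ p, Bts p = Matrix.hadamard (M p) BtJ) :
    (∀ x y, 0 ≤ iterMat Bs x y ∧ iterMat Bs x y ≤ iterMat Bts x y) ∧
      specRad (iterMat Bs) ≤ specRad (iterMat Bts) := by
  have hM_nonneg (p : Fin d) (i j : Fin n) : 0 ≤ M p i j := by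
    rcases hM01 p i j with h | h <;> simp [h]
  have hparts (p : Fin d) : NonnegLE (Bs p) (Bts p) := by
    rw [hBs, hBts]
    exact NonnegLE.hadamard_left (hM_nonneg p) hord
  have hiter := nonnegLE_iterMat hparts
  exact ⟨hiter, hiter.specRad_le⟩

/-- Monotonicity: if `O ≤ B_J ≤ B̃_J` entrywise and the two splittings come
from the same splitting mask, then the iteration matrices satisfy
`O ≤ 𝓑 ≤ 𝓑̃` entrywise, and hence `ρ(𝓑) ≤ ρ(𝓑̃)`. -/
theorem monotonicity_of_splittings (n d : ℕ)
    (BJ BtJ : Matrix (Fin n) (Fin n) ℝ)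
    (hord : ∀ i j, 0 ≤ BJ i j ∧ BJ i j ≤ BtJ i j)
    (M : Fin d → Matrix (Fin n) (Fin n) ℝ)
    (hMne : ∀ p, M p ≠ 0)
    (hM01 : ∀ p i j, M p i j = 0 ∨ M p i j = 1)
    (hMsum : ∑ p, M p = Matrix.of fun _ _ => (1 : ℝ))
    (Bs Bts : Fin d → Matrix (Fin n) (Fin n) ℝ)
    (hBs : ∀ p, Bs p = Matrix.hadamard (M p) BJ)
    (hBts : ∀ p, Bts p = Matrix.hadamard (M p) BtJ) :
    (∀ x y, 0 ≤ iterMat Bs x y ∧ iterMat Bs x y ≤ iterMat Bts x y) ∧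
      specRad (iterMat Bs) ≤ specRad (iterMat Bts) :=
  monotonicity_of_splittings_general n d BJ BtJ hord M hM01 Bs Bts hBs hBts
end

section
/- Let (B₁,...,B_d) be a splitting of B_J with iteration matrix 𝓑_{(d)}. If ‖B_J‖_∞ ≤ 1 then ‖𝓑_{(d)}‖_∞ = ‖B_J‖_∞, and if ‖B_J‖_∞ > 1 then ‖B_J‖_∞ ≤ ‖𝓑_{(d)}‖_∞ ≤ ‖B_J‖_∞^d. -/
open Matrix

/-- The maximum absolute row sum norm `‖·‖_∞` of a matrix. -/
noncomputable def infNorm {m k : Type*} [Fintype k] (M : Matrix m k ℝ) : ℝ :=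
  ⨆ i, ∑ j, |M i j|

lemma blockL_pow_entry {n d : ℕ} (Bs : Fin d → Matrix (Fin n) (Fin n) ℝ) :
    ∀ (k : ℕ) (pi qj : Fin d × Fin n), (pi.1 : ℕ) < (qj.1 : ℕ) + k →
      ((blockL Bs) ^ k) pi qj = 0 := by
  intro k
  induction k with
  | zero =>
    intro pi qj h
    rw [pow_zero]
    have hne : pi ≠ qj := by intro he; subst he; omega
    rw [Matrix.one_apply_ne hne]
  | succ k ih =>
    intro pi qj h
    rw [pow_succ, Matrix.mul_apply]
    apply Finset.sum_eq_zero
    intro rm _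
    by_cases hlt : qj.1 < rm.1
    · have h1 : (qj.1 : ℕ) < (rm.1 : ℕ) := hlt
      rw [ih pi rm (by omega), zero_mul]
    · have : blockL Bs rm qj = 0 := by
        simp only [blockL, Matrix.of_apply, if_neg hlt]
      rw [this, mul_zero]

lemma blockL_pow_eq_zero {n d : ℕ} (Bs : Fin d → Matrix (Fin n) (Fin n) ℝ) :
    (blockL Bs) ^ d = 0 := by
  ext pi qj
  rw [blockL_pow_entry Bs d pi qj (Nat.lt_of_lt_of_le pi.1.isLt (Nat.le_add_left d _))]
  simp

lemma iterMat_eq {n d : ℕ} (Bs : Fin d → Matrix (Fin n) (Fin n) ℝ) :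
    iterMat Bs = blockU Bs + blockL Bs * iterMat Bs := by
  have hnil : IsNilpotent (blockL Bs) := ⟨d, blockL_pow_eq_zero Bs⟩
  have hu : IsUnit (1 - blockL Bs) := hnil.isUnit_one_sub
  have hdet : IsUnit (1 - blockL Bs).det := (Matrix.isUnit_iff_isUnit_det _).mp hu
  have h1 : (1 - blockL Bs) * iterMat Bs = blockU Bs := by
    rw [iterMat, ← Matrix.mul_assoc, Matrix.mul_nonsing_inv _ hdet, Matrix.one_mul]
  have h2 : iterMat Bs - blockL Bs * iterMat Bs = blockU Bs := by
    rw [← h1, Matrix.sub_mul, Matrix.one_mul]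
  exact sub_eq_iff_eq_add.mp h2

lemma iterMat_row_zero {n d : ℕ} (Bs : Fin d → Matrix (Fin n) (Fin n) ℝ)
    (p : Fin d) (hp : (p : ℕ) = 0) (i : Fin n) (r : Fin d) (j : Fin n) :
    iterMat Bs (p, i) (r, j) = Bs r i j := by
  conv_lhs => rw [iterMat_eq]
  rw [Matrix.add_apply, Matrix.mul_apply]
  have h1 : blockU Bs (p, i) (r, j) = Bs r i j := by
    simp only [blockU, Matrix.of_apply]
    rw [if_pos]
    exact Fin.le_def.mpr (by omega)
  have h2 : ∀ qk : Fin d × Fin n, blockL Bs (p, i) qk * iterMat Bs qk (r, j) = 0 := by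
    intro qk
    have hq : ¬ (qk.1 < p) := by rw [Fin.lt_def]; omega
    simp only [blockL, Matrix.of_apply]
    rw [if_neg hq, zero_mul]
  rw [Finset.sum_eq_zero fun qk _ => h2 qk, add_zero, h1]
open Matrix

lemma rowsum_bound {n d : ℕ} (Bs : Fin d → Matrix (Fin n) (Fin n) ℝ)
    (γ : ℝ) (hγ : 1 ≤ γ)
    (hsγ : ∀ i : Fin n, (∑ q, ∑ j, |Bs q i j|) ≤ γ) :
    ∀ (m : ℕ) (p : Fin d), (p : ℕ) = m → ∀ i : Fin n,
      (∑ rj : Fin d × Fin n, |iterMat Bs (p, i) rj|)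
        ≤ (∑ q, ∑ j, |Bs q i j|) * γ ^ m := by
  have hγ0 : (0:ℝ) ≤ γ := le_trans zero_le_one hγ
  intro m
  induction m using Nat.strong_induction_on with
  | _ m ih =>
    intro p hp i
    -- bound on previously-treated row sums
    have hRb : ∀ qk : Fin d × Fin n, qk.1 < p →
        (∑ rj : Fin d × Fin n, |iterMat Bs qk rj|) ≤ γ ^ m := by
      intro qk hq
      have hqlt : (qk.1 : ℕ) < m := by rw [← hp]; exact hq
      have h1 := ih (qk.1 : ℕ) hqlt qk.1 rfl qk.2
      calc (∑ rj : Fin d × Fin n, |iterMat Bs qk rj|)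
          ≤ (∑ q, ∑ j, |Bs q qk.2 j|) * γ ^ (qk.1 : ℕ) := h1
        _ ≤ γ * γ ^ (qk.1 : ℕ) :=
            mul_le_mul_of_nonneg_right (hsγ qk.2) (pow_nonneg hγ0 _)
        _ = γ ^ ((qk.1 : ℕ) + 1) := (pow_succ' γ _).symm
        _ ≤ γ ^ m := pow_le_pow_right₀ hγ (by omega)
    have habsU : ∀ rj : Fin d × Fin n, |iterMat Bs (p, i) rj|
        ≤ |blockU Bs (p, i) rj|
          + ∑ qk : Fin d × Fin n, |blockL Bs (p, i) qk| * |iterMat Bs qk rj| := by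
      intro rj
      calc |iterMat Bs (p, i) rj|
          = |blockU Bs (p, i) rj + (blockL Bs * iterMat Bs) (p, i) rj| := by
            rw [← Matrix.add_apply, ← iterMat_eq]
        _ ≤ |blockU Bs (p, i) rj| + |(blockL Bs * iterMat Bs) (p, i) rj| := abs_add_le _ _
        _ ≤ _ := by
            refine add_le_add (le_refl _) ?_
            rw [Matrix.mul_apply]
            refine (Finset.abs_sum_le_sum_abs _ _).trans (le_of_eq ?_)
            exact Finset.sum_congr rfl fun qk _ => abs_mul _ _
    have hA : (∑ rj : Fin d × Fin n, |blockU Bs (p, i) rj|)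
        = ∑ q : Fin d, (if p ≤ q then ∑ j, |Bs q i j| else 0) := by
      rw [Fintype.sum_prod_type]
      refine Finset.sum_congr rfl fun q _ => ?_
      by_cases h : p ≤ q
      · simp [blockU, h]
      · simp [blockU, h]
    have hB : (∑ rj : Fin d × Fin n, ∑ qk : Fin d × Fin n,
          |blockL Bs (p, i) qk| * |iterMat Bs qk rj|)
        ≤ ∑ q : Fin d, (if q < p then ∑ j, |Bs q i j| else 0) * γ ^ m := by
      calc (∑ rj : Fin d × Fin n, ∑ qk : Fin d × Fin n,
            |blockL Bs (p, i) qk| * |iterMat Bs qk rj|)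
          = ∑ qk : Fin d × Fin n,
              |blockL Bs (p, i) qk| * ∑ rj : Fin d × Fin n, |iterMat Bs qk rj| := by
            rw [Finset.sum_comm]
            exact Finset.sum_congr rfl fun qk _ => (Finset.mul_sum _ _ _).symm
        _ ≤ ∑ qk : Fin d × Fin n,
              (if qk.1 < p then |Bs qk.1 i qk.2| else 0) * γ ^ m := by
            refine Finset.sum_le_sum fun qk _ => ?_
            by_cases h : qk.1 < p
            · have hLa : |blockL Bs (p, i) qk| = |Bs qk.1 i qk.2| := by
                simp [blockL, h]
              rw [hLa, if_pos h]
              exact mul_le_mul_of_nonneg_left (hRb qk h) (abs_nonneg _)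
            · have hLa : |blockL Bs (p, i) qk| = 0 := by simp [blockL, h]
              rw [hLa, if_neg h, zero_mul, zero_mul]
        _ = ∑ q : Fin d, (if q < p then ∑ j, |Bs q i j| else 0) * γ ^ m := by
            rw [Fintype.sum_prod_type]
            refine Finset.sum_congr rfl fun q _ => ?_
            by_cases h : q < p
            · rw [if_pos h, ← Finset.sum_mul]
              congr 1
              exact Finset.sum_congr rfl fun k _ => by rw [if_pos h]
            · simp [h]
    have key : (∑ rj : Fin d × Fin n, |iterMat Bs (p, i) rj|)
        ≤ ∑ q : Fin d, ((if p ≤ q then ∑ j, |Bs q i j| else 0)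
            + (if q < p then ∑ j, |Bs q i j| else 0) * γ ^ m) := by
      calc (∑ rj : Fin d × Fin n, |iterMat Bs (p, i) rj|)
          ≤ ∑ rj : Fin d × Fin n, (|blockU Bs (p, i) rj|
              + ∑ qk : Fin d × Fin n, |blockL Bs (p, i) qk| * |iterMat Bs qk rj|) :=
            Finset.sum_le_sum fun rj _ => habsU rj
        _ = (∑ rj : Fin d × Fin n, |blockU Bs (p, i) rj|)
            + ∑ rj : Fin d × Fin n, ∑ qk : Fin d × Fin n,
                |blockL Bs (p, i) qk| * |iterMat Bs qk rj| := Finset.sum_add_distrib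
        _ ≤ (∑ q : Fin d, (if p ≤ q then ∑ j, |Bs q i j| else 0))
            + ∑ q : Fin d, (if q < p then ∑ j, |Bs q i j| else 0) * γ ^ m := by
            rw [hA]; exact add_le_add (le_refl _) hB
        _ = _ := Finset.sum_add_distrib.symm
    refine key.trans ?_
    have h1m : (1:ℝ) ≤ γ ^ m := one_le_pow₀ hγ
    calc (∑ q : Fin d, ((if p ≤ q then ∑ j, |Bs q i j| else 0)
            + (if q < p then ∑ j, |Bs q i j| else 0) * γ ^ m))
        ≤ ∑ q : Fin d, (∑ j, |Bs q i j|) * γ ^ m := by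
          refine Finset.sum_le_sum fun q _ => ?_
          have haq : (0:ℝ) ≤ ∑ j, |Bs q i j| := Finset.sum_nonneg fun j _ => abs_nonneg _
          by_cases h : p ≤ q
          · rw [if_pos h, if_neg (not_lt.mpr h), zero_mul, add_zero]
            exact le_mul_of_one_le_right haq h1m
          · rw [if_neg h, if_pos (not_le.mp h), zero_add]
      _ = (∑ q, ∑ j, |Bs q i j|) * γ ^ m := (Finset.sum_mul _ _ _).symm

lemma abs_sum_of_pairwise {ι : Type*} [DecidableEq ι] (s : Finset ι) (x : ι → ℝ)
    (h : ∀ p ∈ s, ∀ q ∈ s, p ≠ q → x p * x q = 0) :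
    |∑ p ∈ s, x p| = ∑ p ∈ s, |x p| := by
  induction s using Finset.induction_on with
  | empty => simp
  | insert _ _ hns ih =>
    rename_i a t
    rw [Finset.sum_insert hns, Finset.sum_insert hns]
    by_cases hx : x a = 0
    · rw [hx, zero_add, abs_zero, zero_add]
      exact ih fun p hp q hq => h p (Finset.mem_insert_of_mem hp) q (Finset.mem_insert_of_mem hq)
    · have hz : ∀ q ∈ t, x q = 0 := fun q hq => by
        have := h a (Finset.mem_insert_self a t) q (Finset.mem_insert_of_mem hq)
          (fun he => hns (he ▸ hq))
        exact (mul_eq_zero.mp this).resolve_left hx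
      rw [Finset.sum_eq_zero hz, Finset.sum_eq_zero (fun q hq => by rw [hz q hq, abs_zero]),
        add_zero, add_zero]


/-- `‖𝓑_{(d)}‖_∞ = ‖B_J‖_∞` if `‖B_J‖_∞ ≤ 1`, and
`‖B_J‖_∞ ≤ ‖𝓑_{(d)}‖_∞ ≤ ‖B_J‖_∞^d` if `‖B_J‖_∞ > 1`. -/
theorem infNorm_iterMat (n d : ℕ) (BJ : Matrix (Fin n) (Fin n) ℝ)
    (Bs : Fin d → Matrix (Fin n) (Fin n) ℝ)
    (hsplit : IsSplitting BJ Bs) :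
    (infNorm BJ ≤ 1 → infNorm (iterMat Bs) = infNorm BJ) ∧
    (1 < infNorm BJ →
      infNorm BJ ≤ infNorm (iterMat Bs) ∧
      infNorm (iterMat Bs) ≤ infNorm BJ ^ d) := by
  classical
  obtain ⟨hne, hsum, hdisj⟩ := hsplit
  rcases Nat.eq_zero_or_pos d with hd0 | hd
  · subst hd0
    have hBJ : BJ = 0 := by simpa using hsum.symm
    have h1 : infNorm BJ = 0 := by
      rw [hBJ]
      simp only [infNorm, Matrix.zero_apply, abs_zero, Finset.sum_const_zero]
      rcases isEmpty_or_nonempty (Fin n) with h | h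
      · exact Real.iSup_of_isEmpty _
      · exact ciSup_const
    have h2 : infNorm (iterMat Bs) = 0 := Real.iSup_of_isEmpty _
    constructor
    · intro _; rw [h1, h2]
    · intro hcon; rw [h1] at hcon; linarith
  rcases Nat.eq_zero_or_pos n with hn0 | hn
  · exfalso
    apply hne ⟨0, hd⟩
    subst hn0
    ext i j
    exact i.elim0
  haveI instn : Nonempty (Fin n) := ⟨⟨0, hn⟩⟩
  haveI instd : Nonempty (Fin d) := ⟨⟨0, hd⟩⟩
  have habs : ∀ i j, |BJ i j| = ∑ q, |Bs q i j| := by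
    intro i j
    have h1 : BJ i j = ∑ q, Bs q i j := by
      rw [← hsum, Matrix.sum_apply]
    rw [h1]
    exact abs_sum_of_pairwise Finset.univ _ (fun p _ q _ hpq => by
      have h2 := congrFun (congrFun (hdisj p q hpq) i) j
      simpa [Matrix.hadamard_apply] using h2)
  have hssum : ∀ i, (∑ q, ∑ j, |Bs q i j|) = ∑ j, |BJ i j| := fun i => by
    rw [Finset.sum_comm]
    exact Finset.sum_congr rfl fun j _ => (habs i j).symm
  have hsβ : ∀ i, (∑ q, ∑ j, |Bs q i j|) ≤ infNorm BJ := fun i => by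
    rw [hssum i]
    exact le_ciSup (f := fun i : Fin n => ∑ j, |BJ i j|) (Finite.bddAbove_range _) i
  have hβ0 : (0:ℝ) ≤ infNorm BJ := by
    refine le_trans ?_ (hsβ ⟨0, hn⟩)
    exact Finset.sum_nonneg fun q _ => Finset.sum_nonneg fun j _ => abs_nonneg _
  -- lower bound
  have hlow : infNorm BJ ≤ infNorm (iterMat Bs) := by
    simp only [infNorm]
    refine ciSup_le fun i => ?_
    have h0 : (∑ rj : Fin d × Fin n, |iterMat Bs (⟨0, hd⟩, i) rj|) = ∑ j, |BJ i j| := by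
      rw [Fintype.sum_prod_type]
      calc (∑ r : Fin d, ∑ j : Fin n, |iterMat Bs (⟨0, hd⟩, i) (r, j)|)
          = ∑ r : Fin d, ∑ j : Fin n, |Bs r i j| := by
            refine Finset.sum_congr rfl fun r _ => Finset.sum_congr rfl fun j _ => ?_
            rw [iterMat_row_zero Bs ⟨0, hd⟩ rfl i r j]
        _ = ∑ j, |BJ i j| := hssum i
    calc (∑ j, |BJ i j|) = ∑ rj : Fin d × Fin n, |iterMat Bs (⟨0, hd⟩, i) rj| := h0.symm
      _ ≤ ⨆ pi : Fin d × Fin n, ∑ rj : Fin d × Fin n, |iterMat Bs pi rj| :=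
          le_ciSup (f := fun pi : Fin d × Fin n => ∑ rj : Fin d × Fin n, |iterMat Bs pi rj|)
            (Finite.bddAbove_range _) (⟨0, hd⟩, i)
  constructor
  · intro hβ1
    refine le_antisymm ?_ hlow
    simp only [infNorm]
    refine ciSup_le fun pi => ?_
    have hb := rowsum_bound Bs 1 le_rfl (fun i => le_trans (hsβ i) hβ1)
      (pi.1 : ℕ) pi.1 rfl pi.2
    calc (∑ rj : Fin d × Fin n, |iterMat Bs pi rj|)
        ≤ (∑ q, ∑ j, |Bs q pi.2 j|) * 1 ^ ((pi.1 : ℕ)) := hb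
      _ = ∑ q, ∑ j, |Bs q pi.2 j| := by rw [one_pow, mul_one]
      _ ≤ infNorm BJ := hsβ pi.2
  · intro hβ1
    refine ⟨hlow, ?_⟩
    simp only [infNorm]
    refine ciSup_le fun pi => ?_
    have hb := rowsum_bound Bs (infNorm BJ) (le_of_lt hβ1) hsβ (pi.1 : ℕ) pi.1 rfl pi.2
    calc (∑ rj : Fin d × Fin n, |iterMat Bs pi rj|)
        ≤ (∑ q, ∑ j, |Bs q pi.2 j|) * infNorm BJ ^ ((pi.1 : ℕ)) := hb
      _ ≤ infNorm BJ * infNorm BJ ^ ((pi.1 : ℕ)) :=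
          mul_le_mul_of_nonneg_right (hsβ pi.2) (pow_nonneg hβ0 _)
      _ = infNorm BJ ^ ((pi.1 : ℕ) + 1) := (pow_succ' _ _).symm
      _ ≤ infNorm BJ ^ d := pow_le_pow_right₀ (le_of_lt hβ1) (by omega)
end
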